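/- arXiv:2005.09158 — 5 statements merged into one kernel-verified Lean document; each statement's English description precedes it below -/
import Mathlib

section
/- Let N ≥ 1, α ∈ (0,1], and let c = (c_0,…,c_{N−1})ᵀ ∈ ℂ^N. Let C ∈ ℂ^{N×N} be the α-circulant matrix with first column c. Then V := Γ_α^{-1}𝔽* is invertible and C = V D V^{-1}, where D is the diagonal matrix whose diagonal is the vector √N · 𝔽 Γ_α c. In particular, any two α-circulant matrices of the same size and with the same parameter α are simultaneously diagonalized by the same matrix V = Γ_α^{-1}𝔽*. -/
/-!
Write `γ = α^{1/N}`, so that `Γ_α = diag(γ^j)`. Conjugating by `Γ_α` turns the `α`-circulant `C`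
into the ordinary circulant with first column `Γ_α c`: the wrap-around factor `α` of the entries
above the diagonal is exactly `γ^N`. An ordinary circulant `circ(d)` is diagonalised by the
discrete Fourier transform: since `ω^N = 1`, the columns `(ω^{-jl})_j` of `√N 𝔽*` are
eigenvectors, with eigenvalues `∑ₙ ω^{ln} dₙ = √N (𝔽 d)_l`. Finally `𝔽` is unitary by the
orthogonality of the powers of a primitive root of unity, so `V = Γ_α⁻¹ 𝔽*` is invertible and
`C V = V D` gives `C = V D V⁻¹`.
-/

open Matrix Complex

/-- The discrete Fourier matrix `𝔽` with entries `ω^{jk}/√N`, `ω = e^{2πi/N}` (0-based indices). -/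
noncomputable def fourierMatrix (N : ℕ) : Matrix (Fin N) (Fin N) ℂ :=
  Matrix.of fun j k =>
    Complex.exp (2 * Real.pi * Complex.I * (j : ℕ) * (k : ℕ) / N) / (Real.sqrt N : ℂ)

/-- The diagonal matrix `Γ_α = diag(1, α^{1/N}, …, α^{(N-1)/N})`. -/
noncomputable def gammaMatrix (N : ℕ) (α : ℝ) : Matrix (Fin N) (Fin N) ℂ :=
  Matrix.diagonal fun j => ((α ^ ((j : ℝ) / (N : ℝ)) : ℝ) : ℂ)

/-- The `α`-circulant matrix with first column `c`: entries `c_{j-k}` for `j ≥ k`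
and `α·c_{N+j-k}` for `j < k` (using that `Fin`-subtraction is subtraction mod `N`). -/
noncomputable def alphaCirculant {N : ℕ} (α : ℝ) (c : Fin N → ℂ) :
    Matrix (Fin N) (Fin N) ℂ :=
  Matrix.of fun j k => (if (k : ℕ) ≤ (j : ℕ) then 1 else (α : ℂ)) * c (j - k)

section DFT

variable {R : Type*} [CommRing R] {N : ℕ}

def dftMatrix (N : ℕ) (ζ : R) : Matrix (Fin N) (Fin N) R :=
  Matrix.of fun j k => ζ ^ ((j : ℕ) * k)

theorem pow_val_sub_mul_pow_val {M : Type*} [Monoid M] {ζ : M} (hζ : ζ ^ N = 1) (j k : Fin N) :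
    ζ ^ ((j - k : Fin N) : ℕ) * ζ ^ (k : ℕ) = ζ ^ (j : ℕ) := by
  rw [Fin.val_sub, ← pow_eq_pow_mod _ hζ, ← pow_add,
    show N - k + j + k = N + j by omega, pow_add, hζ, one_mul]

theorem circulant_mul_dftMatrix [NeZero N] {ζ η : R} (hη : η ^ N = 1) (hζη : ζ * η = 1)
    (d : Fin N → R) :
    circulant d * dftMatrix N η = dftMatrix N η * diagonal (dftMatrix N ζ *ᵥ d) := by
  ext j l
  rw [mul_diagonal, mul_apply, mulVec, dotProduct, Finset.mul_sum]
  simp only [circulant_apply, dftMatrix, of_apply]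
  refine Fintype.sum_equiv (Equiv.subLeft j) _ _ fun m => ?_
  rw [Equiv.subLeft_apply, mul_comm (l : ℕ)]
  simp only [pow_mul]
  have hsplit : (η ^ (j : ℕ)) ^ (l : ℕ) =
      (η ^ ((j - m : Fin N) : ℕ)) ^ (l : ℕ) * (η ^ (m : ℕ)) ^ (l : ℕ) := by
    rw [← mul_pow, pow_val_sub_mul_pow_val hη]
  have hinv :
      (ζ ^ ((j - m : Fin N) : ℕ)) ^ (l : ℕ) * (η ^ ((j - m : Fin N) : ℕ)) ^ (l : ℕ) = 1 := by
    rw [← mul_pow, ← mul_pow, hζη, one_pow, one_pow]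
  rw [hsplit]
  linear_combination -(d (j - m) * (η ^ (m : ℕ)) ^ (l : ℕ)) * hinv

theorem sum_pow_val_eq_zero [IsDomain R] {x : R} (hx : x ^ N = 1) (h : x ≠ 1) :
    ∑ k : Fin N, x ^ (k : ℕ) = 0 := by
  rw [Fin.sum_univ_eq_sum_range (x ^ ·)]
  apply mul_right_cancel₀ (sub_ne_zero.2 h)
  rw [geom_sum_mul, hx, sub_self, zero_mul]

theorem dftMatrix_mul_dftMatrix [IsDomain R] {ζ η : R} (hζ : IsPrimitiveRoot ζ N)
    (hζη : ζ * η = 1) : dftMatrix N ζ * dftMatrix N η = (N : R) • 1 := by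
  ext j l
  have hη : η ^ N = 1 := by simpa [mul_pow, hζ.pow_eq_one] using congrArg (· ^ N) hζη
  have hone : ζ ^ (j : ℕ) * η ^ (l : ℕ) = 1 ↔ j = l := by
    constructor
    · intro h
      refine Fin.ext (hζ.pow_inj j.isLt l.isLt ?_)
      calc ζ ^ (j : ℕ) = ζ ^ (j : ℕ) * η ^ (l : ℕ) * ζ ^ (l : ℕ) := by
            rw [mul_assoc, ← mul_pow, mul_comm η, hζη, one_pow, mul_one]
        _ = ζ ^ (l : ℕ) := by rw [h, one_mul]
    · rintro rfl
      rw [← mul_pow, hζη, one_pow]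
  have hsum : (dftMatrix N ζ * dftMatrix N η) j l
      = ∑ k : Fin N, (ζ ^ (j : ℕ) * η ^ (l : ℕ)) ^ (k : ℕ) := by
    simp only [mul_apply, dftMatrix, of_apply, mul_pow, ← pow_mul, mul_comm (l : ℕ)]
  rw [hsum, Matrix.smul_apply, one_apply, smul_eq_mul]
  split_ifs with h
  · simp [hone.2 h]
  · rw [mul_zero]
    refine sum_pow_val_eq_zero ?_ (mt hone.1 h)
    rw [mul_pow, ← pow_mul, ← pow_mul, pow_mul', pow_mul' η, hζ.pow_eq_one, hη, one_pow, one_pow,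
      one_mul]

theorem conjTranspose_dftMatrix [StarRing R] (ζ : R) :
    (dftMatrix N ζ)ᴴ = dftMatrix N (star ζ) := by
  ext j k
  simp only [conjTranspose_apply, dftMatrix, of_apply, star_pow, mul_comm (k : ℕ)]

end DFT

section Fourier

noncomputable def fourierRoot (N : ℕ) : ℂ := exp (2 * Real.pi * I / N)

theorem fourierRoot_ne_zero (N : ℕ) : fourierRoot N ≠ 0 :=
  exp_ne_zero _

theorem star_fourierRoot (N : ℕ) : star (fourierRoot N) = (fourierRoot N)⁻¹ := by
  rw [fourierRoot, ← exp_neg, Complex.star_def, ← exp_conj]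
  congr 1
  simp only [map_div₀, map_mul, map_ofNat, conj_ofReal, conj_I, map_natCast]
  ring

theorem fourierMatrix_eq_smul_dftMatrix (N : ℕ) :
    fourierMatrix N = (Real.sqrt N : ℂ)⁻¹ • dftMatrix N (fourierRoot N) := by
  ext j k
  rw [fourierMatrix, Matrix.smul_apply, dftMatrix, of_apply, of_apply, fourierRoot,
    ← exp_nat_mul, smul_eq_mul, div_eq_inv_mul]
  push_cast
  ring_nf

theorem conjTranspose_fourierMatrix (N : ℕ) :
    (fourierMatrix N)ᴴ = (Real.sqrt N : ℂ)⁻¹ • dftMatrix N (fourierRoot N)⁻¹ := by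
  rw [fourierMatrix_eq_smul_dftMatrix, conjTranspose_smul, conjTranspose_dftMatrix,
    star_fourierRoot, star_inv₀, Complex.star_def, conj_ofReal]

variable (N : ℕ) [NeZero N]

theorem isPrimitiveRoot_fourierRoot : IsPrimitiveRoot (fourierRoot N) N :=
  isPrimitiveRoot_exp N (NeZero.ne N)

theorem fourierMatrix_mul_conjTranspose : fourierMatrix N * (fourierMatrix N)ᴴ = 1 := by
  have hsq : (Real.sqrt N : ℂ) ^ 2 = N := by
    rw [← ofReal_pow, Real.sq_sqrt N.cast_nonneg, ofReal_natCast]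
  rw [conjTranspose_fourierMatrix, fourierMatrix_eq_smul_dftMatrix, Matrix.smul_mul,
    Matrix.mul_smul, dftMatrix_mul_dftMatrix (isPrimitiveRoot_fourierRoot N)
      (mul_inv_cancel₀ (fourierRoot_ne_zero N)),
    smul_smul, smul_smul, ← sq, inv_pow, hsq, inv_mul_cancel₀ (NeZero.ne _ : (N : ℂ) ≠ 0),
    one_smul]

theorem circulant_mul_conjTranspose_fourierMatrix (d : Fin N → ℂ) :
    circulant d * (fourierMatrix N)ᴴ =
      (fourierMatrix N)ᴴ * diagonal fun j => (Real.sqrt N : ℂ) * (fourierMatrix N *ᵥ d) j := by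
  have hroot : (fourierRoot N)⁻¹ ^ N = 1 := by
    rw [inv_pow, (isPrimitiveRoot_fourierRoot N).pow_eq_one, inv_one]
  have hsqrt : (Real.sqrt N : ℂ) ≠ 0 :=
    ofReal_ne_zero.2 (Real.sqrt_ne_zero'.2 (by exact_mod_cast NeZero.pos N))
  rw [conjTranspose_fourierMatrix, Matrix.smul_mul, Matrix.mul_smul,
    circulant_mul_dftMatrix hroot (mul_inv_cancel₀ (fourierRoot_ne_zero N)),
    fourierMatrix_eq_smul_dftMatrix]
  congr 3
  ext j
  rw [smul_mulVec, Pi.smul_apply, smul_eq_mul, mul_inv_cancel_left₀ hsqrt]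

end Fourier

section AlphaCirculant

variable {N : ℕ} {α : ℝ}

theorem rpow_val_sub_div_mul_rpow_val_div (hα : 0 < α) (j k : Fin N) :
    α ^ (((j - k : Fin N) : ℕ) / N : ℝ) * α ^ ((k : ℕ) / N : ℝ) =
      α ^ ((j : ℕ) / N : ℝ) * if (k : ℕ) ≤ j then 1 else α := by
  have hN : (N : ℝ) ≠ 0 := by exact_mod_cast (Fin.pos j).ne'
  rw [← Real.rpow_add hα]
  split_ifs with hkj
  · rw [Fin.coe_sub_iff_le.2 (Fin.le_def.2 hkj), Nat.cast_sub hkj, mul_one]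
    congr 1
    ring
  · rw [Fin.coe_sub_iff_lt.2 (Fin.lt_def.2 (by omega)), Nat.cast_sub (by omega),
      ← Real.rpow_add_one hα.ne']
    congr 1
    push_cast
    field_simp
    ring

theorem gammaMatrix_mul_alphaCirculant (hα : 0 < α) (c : Fin N → ℂ) :
    gammaMatrix N α * alphaCirculant α c =
      circulant (gammaMatrix N α *ᵥ c) * gammaMatrix N α := by
  ext j k
  simp only [gammaMatrix, diagonal_mul, mul_diagonal, alphaCirculant, circulant_apply, of_apply,
    mulVec_diagonal]
  rw [mul_right_comm, ← ofReal_mul, rpow_val_sub_div_mul_rpow_val_div hα, ofReal_mul,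
    apply_ite ofReal, ofReal_one, mul_assoc]

theorem isUnit_gammaMatrix (hα : 0 < α) : IsUnit (gammaMatrix N α) :=
  isUnit_diagonal.2 <| Pi.isUnit_iff.2 fun _ =>
    (ofReal_ne_zero.2 (Real.rpow_pos_of_pos hα _).ne').isUnit

end AlphaCirculant

/-- Diagonalization of α-circulant matrices: `C = V D V⁻¹` with `V = Γ_α⁻¹ 𝔽*` and
`D = diag(√N · 𝔽 Γ_α c)`. -/
theorem alphaCirculant_diagonalization (N : ℕ) (hN : 1 ≤ N) (α : ℝ)
    (hα : α ∈ Set.Ioc (0 : ℝ) 1) (c : Fin N → ℂ) :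
    IsUnit ((gammaMatrix N α)⁻¹ * (fourierMatrix N)ᴴ) ∧
    alphaCirculant α c =
      ((gammaMatrix N α)⁻¹ * (fourierMatrix N)ᴴ) *
        Matrix.diagonal (fun j =>
          (Real.sqrt N : ℂ) * (fourierMatrix N).mulVec ((gammaMatrix N α).mulVec c) j) *
        ((gammaMatrix N α)⁻¹ * (fourierMatrix N)ᴴ)⁻¹ := by
  have : NeZero N := ⟨by omega⟩
  set Γ := gammaMatrix N α
  set F := fourierMatrix N
  have hΓ : IsUnit Γ.det := (isUnit_iff_isUnit_det Γ).1 (isUnit_gammaMatrix hα.1)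
  have hF : IsUnit Fᴴ := (isUnit_iff_isUnit_det _).2
    (isUnit_det_of_left_inverse (fourierMatrix_mul_conjTranspose N))
  have hV : IsUnit (Γ⁻¹ * Fᴴ) := (isUnit_nonsing_inv_iff.2 (isUnit_gammaMatrix hα.1)).mul hF
  refine ⟨hV, ?_⟩
  have hCV : alphaCirculant α c * (Γ⁻¹ * Fᴴ) =
      Γ⁻¹ * Fᴴ * diagonal fun j => (Real.sqrt N : ℂ) * (F *ᵥ (Γ *ᵥ c)) j :=
    calc alphaCirculant α c * (Γ⁻¹ * Fᴴ)
        = Γ⁻¹ * (Γ * alphaCirculant α c) * Γ⁻¹ * Fᴴ := by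
          rw [Matrix.nonsing_inv_mul_cancel_left Γ _ hΓ, mul_assoc]
      _ = Γ⁻¹ * circulant (Γ *ᵥ c) * Fᴴ := by
          rw [gammaMatrix_mul_alphaCirculant hα.1, ← mul_assoc,
            Matrix.mul_nonsing_inv_cancel_right Γ _ hΓ]
      _ = _ := by rw [mul_assoc, circulant_mul_conjTranspose_fourierMatrix, mul_assoc]
  rw [← hCV, Matrix.mul_nonsing_inv_cancel_right _ _ ((isUnit_iff_isUnit_det _).1 hV)]
end

section
/- Let N_t ≥ 2. The polynomial q(x) = U_{N_t−1}(x) − i·T_{N_t}(x) ∈ ℂ[x] has exactly N_t pairwise distinct complex roots x_1, …, x_{N_t}. -/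
/-!
At a multiple root `z` of `q = U_{n-1} - i T_n` we have `U_{n-1}(z) = i T_n(z)` and, since
`T_n' = n U_{n-1}`, also `U_{n-1}'(z) = -n T_n(z)`. Substituting into the differential identity
`n T_n = x U_{n-1} - (1 - x²) U_{n-1}'` and the Pell identity `T_n² + (1 - x²) U_{n-1}² = 1`
forces `n z = i` and `T_n(z)² = -n²`. But `i / n = cos (π/2 - u i)` with
`u = arsinh (1/n) ≤ 1/n`, so
`|T_n(i/n)| = |cos (n (π/2 - u i))| ≤ cosh (n u) ≤ cosh 1 < 2 ≤ n`.
Hence `q` is separable, and having degree `n` it has `n` distinct roots.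
-/

open Polynomial Polynomial.Chebyshev Complex

theorem Polynomial.separable_of_forall_isRoot_not_isRoot_derivative {K : Type*} [Field K]
    [IsAlgClosed K] {p : K[X]} (h : ∀ a, p.IsRoot a → ¬ (derivative p).IsRoot a) :
    p.Separable := by
  rw [separable_def, isCoprime_iff_aeval_ne_zero_of_isAlgClosed K K]
  intro a
  simpa only [coe_aeval_eq_eval, or_iff_not_imp_left, not_not, IsRoot.def] using h a

theorem Complex.norm_cos_le_cosh_im (z : ℂ) : ‖cos z‖ ≤ Real.cosh z.im := by
  calc ‖cos z‖ = ‖exp (z * I) + exp (-z * I)‖ / 2 := by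
        rw [cos, norm_div, RCLike.norm_ofNat]
    _ ≤ (‖exp (z * I)‖ + ‖exp (-z * I)‖) / 2 := by gcongr; exact norm_add_le _ _
    _ = Real.cosh z.im := by
        simp only [norm_exp, Real.cosh_eq, mul_re, I_re, I_im, neg_re, neg_im]
        ring_nf

theorem Real.cosh_one_lt_two : Real.cosh 1 < 2 := by
  have he : Real.exp 1 < 3 := Real.exp_one_lt_d9.trans (by norm_num)
  have he' : Real.exp (-1) < 1 := Real.exp_lt_one_iff.mpr (by norm_num)
  rw [Real.cosh_eq]
  linarith

namespace Polynomial.Chebyshev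

theorem T_eval_sq_add_one_sub_sq_mul_U_eval_sq (n : ℤ) (z : ℂ) :
    (T ℂ n).eval z ^ 2 + (1 - z ^ 2) * (U ℂ (n - 1)).eval z ^ 2 = 1 := by
  obtain ⟨θ, rfl⟩ := cos_surjective z
  have hU := U_complex_cos θ (n - 1)
  push_cast at hU
  rw [sub_add_cancel] at hU
  rw [T_complex_cos, ← sin_sq, ← cos_sq_add_sin_sq ((n : ℂ) * θ), ← hU]
  ring

theorem norm_T_eval_sinh_mul_I_le (n : ℤ) (u : ℝ) :
    ‖(T ℂ n).eval (Real.sinh u * I)‖ ≤ Real.cosh (n * u) := by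
  have hcos : (Real.sinh u : ℂ) * I = cos (Real.pi / 2 - u * I) := by
    rw [cos_pi_div_two_sub, sin_mul_I, ofReal_sinh]
  rw [hcos, T_complex_cos, ← Real.cosh_neg]
  refine (norm_cos_le_cosh_im _).trans_eq ?_
  simp

theorem norm_T_eval_I_div_lt {n : ℕ} (hn : 2 ≤ n) : ‖(T ℂ n).eval (I / n)‖ < n := by
  have hn0 : (0 : ℝ) < n := by positivity
  set u := Real.arsinh ((n : ℝ)⁻¹) with hu
  have hz : I / n = Real.sinh u * I := by
    rw [hu, Real.sinh_arsinh]; push_cast; ring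
  have hu0 : 0 ≤ u := Real.arsinh_nonneg_iff.mpr (by positivity)
  have hun : u ≤ (n : ℝ)⁻¹ := by
    rw [← Real.sinh_le_sinh, hu, Real.sinh_arsinh]
    exact Real.self_le_sinh_iff.mpr (by positivity)
  have hnu : (n : ℝ) * u ≤ 1 := by
    calc (n : ℝ) * u ≤ n * (n : ℝ)⁻¹ := by gcongr
      _ = 1 := mul_inv_cancel₀ hn0.ne'
  calc ‖(T ℂ n).eval (I / n)‖ ≤ Real.cosh ((n : ℤ) * u) := by
        rw [hz]; exact norm_T_eval_sinh_mul_I_le n u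
    _ ≤ Real.cosh 1 := by
        rw [Real.cosh_le_cosh, abs_one, abs_of_nonneg (by positivity)]
        exact_mod_cast hnu
    _ < 2 := Real.cosh_one_lt_two
    _ ≤ n := by exact_mod_cast hn

noncomputable def hybrid (n : ℤ) : ℂ[X] := U ℂ (n - 1) - Polynomial.C I * T ℂ n

theorem natDegree_hybrid {n : ℕ} (hn : n ≠ 0) : (hybrid n).natDegree = n := by
  rw [hybrid, natDegree_sub_eq_right_of_natDegree_lt] <;>
    rw [natDegree_C_mul I_ne_zero, natDegree_T]
  · simp
  · rw [natDegree_U]; omega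

theorem mul_eq_I_and_eval_T_sq_of_isRoot_hybrid_of_isRoot_derivative {n : ℤ} {z : ℂ}
    (hq : (hybrid n).IsRoot z) (hq' : (derivative (hybrid n)).IsRoot z) :
    n * z = I ∧ (T ℂ n).eval z ^ 2 = -n ^ 2 := by
  set t := (T ℂ n).eval z
  set p := (U ℂ (n - 1)).eval z
  set p' := (derivative (U ℂ (n - 1))).eval z
  have hp : p = I * t := by
    simpa [hybrid, sub_eq_zero] using hq
  have hp' : p' = I * n * p := by
    simpa [hybrid, T_derivative_eq_U, sub_eq_zero, mul_assoc] using hq'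
  have hode : n * t = z * p - (1 - z ^ 2) * p' := by
    simpa using congrArg (eval z) (add_one_mul_T_eq_poly_in_U (R := ℂ) (n - 1))
  have hpell : t ^ 2 + (1 - z ^ 2) * p ^ 2 = 1 := T_eval_sq_add_one_sub_sq_mul_U_eval_sq n z
  have hzt : (z * t) ^ 2 = 1 := by
    linear_combination hpell - (1 - z ^ 2) * (p + I * t) * hp - (1 - z ^ 2) * t ^ 2 * I_sq
  have hfac : z * t * (n * z - I) = 0 := by
    linear_combination hode + (z - (1 - z ^ 2) * I * n) * hp - (1 - z ^ 2) * hp'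
      - (1 - z ^ 2) * n * t * I_sq
  have hnz : n * z = I := sub_eq_zero.mp ((mul_eq_zero.mp hfac).resolve_left (by
    rintro h; simp [h] at hzt))
  refine ⟨hnz, ?_⟩
  linear_combination (-(n : ℂ) ^ 2) * hzt + t ^ 2 * (n * z + I) * hnz + t ^ 2 * I_sq

theorem separable_hybrid {n : ℕ} (hn : 2 ≤ n) : (hybrid n).Separable := by
  refine separable_of_forall_isRoot_not_isRoot_derivative fun z hq hq' => ?_
  obtain ⟨hnz, ht⟩ := mul_eq_I_and_eval_T_sq_of_isRoot_hybrid_of_isRoot_derivative hq hq'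
  push_cast at hnz ht
  have hz : z = I / n := by
    rw [← hnz, mul_div_cancel_left₀ _ (by exact_mod_cast (show n ≠ 0 by omega))]
  have hnorm : ‖(T ℂ n).eval z‖ = n := by
    have := congrArg norm ht
    rw [norm_neg, norm_pow, norm_pow, Complex.norm_natCast] at this
    exact (pow_left_inj₀ (norm_nonneg _) n.cast_nonneg two_ne_zero).mp this
  exact (norm_T_eval_I_div_lt hn).ne (hz ▸ hnorm)

end Polynomial.Chebyshev

/-- The polynomial `q(x) = U_{N_t-1}(x) - i·T_{N_t}(x)`, where `T` and `U` are the
Chebyshev polynomials of the first and second kind, has exactly `N_t` pairwise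
distinct complex roots. -/
theorem chebyshev_hybrid_poly_distinct_roots (Nt : ℕ) (hNt : 2 ≤ Nt) :
    let q : Polynomial ℂ :=
      Polynomial.Chebyshev.U ℂ ((Nt : ℤ) - 1) -
        Polynomial.C Complex.I * Polynomial.Chebyshev.T ℂ (Nt : ℤ)
    q ≠ 0 ∧ q.roots.toFinset.card = Nt := by
  show hybrid Nt ≠ 0 ∧ (hybrid Nt).roots.toFinset.card = Nt
  have hdeg : (hybrid Nt).natDegree = Nt := natDegree_hybrid (by omega)
  refine ⟨ne_zero_of_natDegree_gt (n := 0) (by omega), ?_⟩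
  rw [Multiset.toFinset_card_of_nodup (nodup_roots (separable_hybrid hNt)),
    IsAlgClosed.card_roots_eq_natDegree, hdeg]
end

section
/- Let A ∈ ℂ^{N_x×N_x} be diagonalizable and suppose every eigenvalue λ of A satisfies Re(λ) ≥ 0. Let Δt > 0, N_t ≥ 2 and α ∈ (0,1). Define the Trapezoidal-rule all-at-once matrix 𝐀 = (1/Δt)(I − S) ⊗ I_x + (1/2)(I + S) ⊗ A and its α-circulant approximation P_α = (1/Δt)(I − S_α) ⊗ I_x + (1/2)(I + S_α) ⊗ A. Then P_α is invertible and the spectral radius of the iteration matrix I − P_α^{-1}𝐀 satisfies ρ(I − P_α^{-1}𝐀) ≤ α/(1−α). -/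
open Matrix
open scoped Kronecker

/-- The down-shift matrix `S` (entries `S_{j+1,j} = 1`, 0-based: `S j k = 1` iff `j = k+1`). -/
noncomputable def downShift (N : ℕ) : Matrix (Fin N) (Fin N) ℂ :=
  Matrix.of fun j k : Fin N => if (j : ℕ) = (k : ℕ) + 1 then (1 : ℂ) else 0

/-- The α-shift matrix `S_α = S + α E_{1,N}`, where `E_{1,N}` has a single `1` in the
top-right corner. -/
noncomputable def downShiftAlpha (N : ℕ) (α : ℂ) : Matrix (Fin N) (Fin N) ℂ :=
  downShift N +
    α • Matrix.of fun j k : Fin N => if (j : ℕ) = 0 ∧ (k : ℕ) + 1 = N then (1 : ℂ) else 0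

/-!
Conjugation by `1 ⊗ P` block-diagonalises every matrix `X ⊗ 1 + Y ⊗ A`, so the relevant
determinants factor over the eigenvalues `λ` of `A` into determinants of `a • 1 + b • S_β`, with
`a = 1/Δt + λ/2` and `b = λ/2 - 1/Δt`; A-stability of the trapezoidal rule is `‖b‖ ≤ ‖a‖`.
A kernel vector of `a • 1 + b • S_β` obeys `a wᵢ₊₁ = -b wᵢ`, closed up by the corner entry, which
forces `a ^ N = (-b) ^ N β`. For `P_α` (`β = α < 1`) this is impossible. Moreover `z ≠ 0` is an
eigenvalue of `I - P_α⁻¹ 𝐀` iff the pencil `(z - 1) P_α + 𝐀`, which is `z` times the all-at-once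
matrix built on `S_β` with `β = (z - 1) α / z`, is singular; this yields
`z a ^ N = (z - 1) α (-b) ^ N`, whence `‖z‖ ≤ α / (1 - α)`.
-/

lemma downShiftAlpha_mulVec_zero (n : ℕ) (β : ℂ) (w : Fin (n + 1) → ℂ) :
    (downShiftAlpha (n + 1) β *ᵥ w) 0 = β * w (Fin.last n) := by
  rw [mulVec, dotProduct, Finset.sum_eq_single (Fin.last n)]
  · simp [downShiftAlpha, downShift]
  · intro j _ hj
    have : (j : ℕ) ≠ n := fun h => hj (Fin.ext h)
    simp [downShiftAlpha, downShift, this]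
  · simp

lemma downShiftAlpha_mulVec_succ (n : ℕ) (β : ℂ) (w : Fin (n + 1) → ℂ) (i : Fin n) :
    (downShiftAlpha (n + 1) β *ᵥ w) i.succ = w i.castSucc := by
  rw [mulVec, dotProduct, Finset.sum_eq_single i.castSucc]
  · simp [downShiftAlpha, downShift]
  · intro j _ hj
    have : (i : ℕ) ≠ j := fun h => hj (Fin.ext h.symm)
    simp [downShiftAlpha, downShift, this]
  · simp

lemma pow_eq_of_smul_one_add_smul_downShiftAlpha_mulVec_eq_zero {n : ℕ} {c d β : ℂ} (hc : c ≠ 0)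
    {w : Fin (n + 1) → ℂ} (hw : w ≠ 0)
    (h : (c • 1 + d • downShiftAlpha (n + 1) β) *ᵥ w = 0) :
    c ^ (n + 1) = (-d) ^ (n + 1) * β := by
  have row : ∀ i, c * w i + d * (downShiftAlpha (n + 1) β *ᵥ w) i = 0 := fun i => by
    simpa [add_mulVec, smul_mulVec] using congrFun h i
  have geom : ∀ i : Fin (n + 1), c ^ (i : ℕ) * w i = (-d) ^ (i : ℕ) * w 0 := by
    intro i
    induction i using Fin.induction with
    | zero => simp
    | succ i ih =>
      have hi := row i.succ
      rw [downShiftAlpha_mulVec_succ] at hi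
      rw [Fin.val_castSucc] at ih
      rw [Fin.val_succ]
      linear_combination c ^ (i : ℕ) * hi - d * ih
  have hw0 : w 0 ≠ 0 := by
    refine fun h0 => hw (funext fun i => ?_)
    simpa [h0, hc] using geom i
  have h0 := row 0
  rw [downShiftAlpha_mulVec_zero] at h0
  have hlast := geom (Fin.last n)
  rw [Fin.val_last] at hlast
  apply mul_left_cancel₀ hw0
  linear_combination c ^ n * h0 - d * β * hlast

lemma pow_eq_of_det_smul_one_add_smul_downShiftAlpha_eq_zero {N : ℕ} {c d β : ℂ} (hc : c ≠ 0)
    (h : det (c • 1 + d • downShiftAlpha N β) = 0) : c ^ N = (-d) ^ N * β := by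
  obtain ⟨w, hw, hmul⟩ := exists_mulVec_eq_zero_iff.mpr h
  cases N with
  | zero => exact absurd (Subsingleton.elim w 0) hw
  | succ n => exact pow_eq_of_smul_one_add_smul_downShiftAlpha_mulVec_eq_zero hc hw hmul

lemma kronecker_one_add_kronecker_diagonal {m n R : Type*} [DecidableEq n] [CommRing R]
    (X Y : Matrix m m R) (d : n → R) :
    X ⊗ₖ 1 + Y ⊗ₖ diagonal d = blockDiagonal fun j => X + d j • Y := by
  ext ⟨i, j⟩ ⟨k, l⟩
  by_cases hjl : j = l
  · subst hjl
    simp [mul_comm]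
  · simp [hjl, blockDiagonal_apply_ne]

lemma det_kronecker_one_add_kronecker_conj_diagonal {m n R : Type*} [Fintype m] [DecidableEq m]
    [Fintype n] [DecidableEq n] [CommRing R] (X Y : Matrix m m R) {P : Matrix n n R}
    (hP : IsUnit P) (d : n → R) :
    det (X ⊗ₖ 1 + Y ⊗ₖ (P⁻¹ * diagonal d * P)) = ∏ j, det (X + d j • Y) := by
  have hconj : X ⊗ₖ 1 + Y ⊗ₖ (P⁻¹ * diagonal d * P) =
      (1 ⊗ₖ P)⁻¹ * (X ⊗ₖ 1 + Y ⊗ₖ diagonal d) * (1 ⊗ₖ P) := by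
    rw [inv_kronecker, inv_one, Matrix.mul_add, Matrix.add_mul, ← mul_kronecker_mul,
      ← mul_kronecker_mul, ← mul_kronecker_mul, ← mul_kronecker_mul]
    simp only [Matrix.one_mul, Matrix.mul_one, nonsing_inv_mul _ ((isUnit_iff_isUnit_det P).mp hP)]
  rw [hconj, det_conj' (isUnit_one.kronecker hP), kronecker_one_add_kronecker_diagonal,
    det_blockDiagonal]

lemma mem_spectrum_one_sub_inv_mul_iff {n K : Type*} [Fintype n] [DecidableEq n] [Field K]
    {M N : Matrix n n K} (hM : IsUnit M) (z : K) :
    z ∈ spectrum K (1 - M⁻¹ * N) ↔ det ((z - 1) • M + N) = 0 := by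
  have hfactor : algebraMap K (Matrix n n K) z - (1 - M⁻¹ * N) = M⁻¹ * ((z - 1) • M + N) := by
    rw [Matrix.mul_add, Matrix.mul_smul, nonsing_inv_mul _ ((isUnit_iff_isUnit_det M).mp hM),
      Algebra.algebraMap_eq_smul_one, sub_smul, one_smul]
    abel
  have hdet : M⁻¹.det ≠ 0 :=
    ((isUnit_iff_isUnit_det _).mp (isUnit_nonsing_inv_iff.mpr hM)).ne_zero
  rw [spectrum.mem_iff, hfactor, isUnit_iff_isUnit_det, det_mul, isUnit_iff_ne_zero,
    not_not, mul_eq_zero, or_iff_right hdet]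

lemma norm_le_div_one_sub_of_mul_eq_sub_one_mul {c e z : ℂ} {r : ℝ} (hr : r < 1) (hc : c ≠ 0)
    (he : ‖e‖ ≤ r * ‖c‖) (h : z * c = (z - 1) * e) : ‖z‖ ≤ r / (1 - r) := by
  have hgap : (1 - r) * ‖c‖ ≤ ‖c - e‖ := by linarith [norm_sub_norm_le c e]
  have key : (‖z‖ * (1 - r)) * ‖c‖ ≤ r * ‖c‖ :=
    calc (‖z‖ * (1 - r)) * ‖c‖ ≤ ‖z‖ * ‖c - e‖ := by
          rw [mul_assoc]; exact mul_le_mul_of_nonneg_left hgap (norm_nonneg z)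
      _ = ‖e‖ := by rw [← norm_mul, show z * (c - e) = -e by linear_combination h, norm_neg]
      _ ≤ r * ‖c‖ := he
  rw [le_div_iff₀ (sub_pos.mpr hr)]
  exact le_of_mul_le_mul_right key (norm_pos_iff.mpr hc)

lemma norm_sub_ofReal_le_norm_add_ofReal {w : ℂ} (hw : 0 ≤ w.re) {u : ℝ} (hu : 0 ≤ u) :
    ‖w - u‖ ≤ ‖w + u‖ := by
  rw [← sq_le_sq₀ (norm_nonneg _) (norm_nonneg _), Complex.sq_norm, Complex.sq_norm,
    Complex.normSq_sub, Complex.normSq_add]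
  simp only [Complex.conj_ofReal, Complex.mul_re, Complex.ofReal_re, Complex.ofReal_im]
  nlinarith

lemma norm_pow_mul_ofReal_le {a b : ℂ} (hab : ‖b‖ ≤ ‖a‖) (N : ℕ) {α : ℝ} (hα : 0 ≤ α) :
    ‖(-b) ^ N * α‖ ≤ α * ‖a ^ N‖ := by
  rw [norm_mul, norm_pow, norm_neg, norm_pow, Complex.norm_real, Real.norm_of_nonneg hα, mul_comm]
  exact mul_le_mul_of_nonneg_left (pow_le_pow_left₀ (norm_nonneg b) hab N) hα

lemma det_smul_one_add_smul_downShiftAlpha_ne_zero {N : ℕ} {a b : ℂ} (ha : a ≠ 0)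
    (hab : ‖b‖ ≤ ‖a‖) {α : ℝ} (hα : α ∈ Set.Ioo (0 : ℝ) 1) :
    det (a • 1 + b • downShiftAlpha N α) ≠ 0 := by
  intro h
  have hle := norm_pow_mul_ofReal_le hab N hα.1.le
  rw [← pow_eq_of_det_smul_one_add_smul_downShiftAlpha_eq_zero ha h] at hle
  have : 0 < ‖a ^ N‖ := norm_pos_iff.mpr (pow_ne_zero N ha)
  nlinarith [hα.2]

lemma norm_le_of_det_smul_one_add_smul_downShiftAlpha_eq_zero {N : ℕ} {a b z : ℂ} (ha : a ≠ 0)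
    (hab : ‖b‖ ≤ ‖a‖) {α : ℝ} (hα : α ∈ Set.Ioo (0 : ℝ) 1) (hz : z ≠ 0)
    (h : det (a • 1 + b • downShiftAlpha N ((z - 1) * α / z)) = 0) :
    ‖z‖ ≤ α / (1 - α) := by
  refine norm_le_div_one_sub_of_mul_eq_sub_one_mul hα.2 (pow_ne_zero N ha)
    (norm_pow_mul_ofReal_le hab N hα.1.le) ?_
  rw [pow_eq_of_det_smul_one_add_smul_downShiftAlpha_eq_zero ha h]
  field_simp

lemma smul_downShiftAlpha_add_downShift {N : ℕ} (α : ℂ) {z : ℂ} (hz : z ≠ 0) :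
    (z - 1) • downShiftAlpha N α + downShift N = z • downShiftAlpha N ((z - 1) * α / z) := by
  simp only [downShiftAlpha, smul_add, smul_smul, mul_div_cancel₀ _ hz]
  module

noncomputable def trapezoidalAllAtOnce {m n : Type*} [DecidableEq m] [DecidableEq n] (Δt : ℂ)
    (S : Matrix m m ℂ) (A : Matrix n n ℂ) : Matrix (m × n) (m × n) ℂ :=
  (1 / Δt) • ((1 - S) ⊗ₖ 1) + (1 / 2 : ℂ) • ((1 + S) ⊗ₖ A)

lemma smul_trapezoidalAllAtOnce_add {m n : Type*} [DecidableEq m] [DecidableEq n] (Δt : ℂ)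
    (A : Matrix n n ℂ) {z : ℂ} {S₁ S₂ S₃ : Matrix m m ℂ} (hS : (z - 1) • S₁ + S₂ = z • S₃) :
    (z - 1) • trapezoidalAllAtOnce Δt S₁ A + trapezoidalAllAtOnce Δt S₂ A =
      z • trapezoidalAllAtOnce Δt S₃ A := by
  ext ⟨i, j⟩ ⟨k, l⟩
  have hik := congrFun (congrFun hS i) k
  simp only [Matrix.add_apply, Matrix.smul_apply, smul_eq_mul] at hik
  simp only [trapezoidalAllAtOnce, Matrix.add_apply, Matrix.smul_apply, Matrix.sub_apply,
    kroneckerMap_apply, smul_eq_mul]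
  linear_combination ((A j l) / 2 - (1 : Matrix n n ℂ) j l / Δt) * hik

lemma det_trapezoidalAllAtOnce {m n : Type*} [Fintype m] [DecidableEq m] [Fintype n]
    [DecidableEq n] (Δt : ℂ) (S : Matrix m m ℂ) {P : Matrix n n ℂ} (hP : IsUnit P)
    (d : n → ℂ) :
    det (trapezoidalAllAtOnce Δt S (P⁻¹ * diagonal d * P)) =
      ∏ j, det ((1 / Δt + d j / 2) • 1 + (d j / 2 - 1 / Δt) • S) := by
  rw [trapezoidalAllAtOnce, ← smul_kronecker, ← smul_kronecker,
    det_kronecker_one_add_kronecker_conj_diagonal _ _ hP]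
  congr! 2 with j
  module

lemma one_div_ofReal_add_div_two_ne_zero {Δt : ℝ} (hΔt : 0 < Δt) {μ : ℂ} (hμ : 0 ≤ μ.re) :
    1 / (Δt : ℂ) + μ / 2 ≠ 0 := by
  intro h
  have hre := congrArg Complex.re h
  simp only [Complex.add_re, Complex.div_ofNat_re, Complex.zero_re, one_div,
    Complex.inv_re, Complex.ofReal_re, Complex.normSq_ofReal] at hre
  have : 0 < Δt / (Δt * Δt) := by positivity
  linarith

lemma norm_div_two_sub_one_div_ofReal_le {Δt : ℝ} (hΔt : 0 < Δt) {μ : ℂ} (hμ : 0 ≤ μ.re) :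
    ‖μ / 2 - 1 / Δt‖ ≤ ‖1 / (Δt : ℂ) + μ / 2‖ := by
  have hcast : 1 / (Δt : ℂ) = ((1 / Δt : ℝ) : ℂ) := by push_cast; rfl
  rw [hcast, add_comm]
  refine norm_sub_ofReal_le_norm_add_ofReal ?_ (by positivity)
  simpa using div_nonneg hμ zero_le_two

theorem paraDiagII_TR_spectralRadius_bound_general (Nx Nt : ℕ)
    (A : Matrix (Fin Nx) (Fin Nx) ℂ)
    (hdiag : ∃ (P : Matrix (Fin Nx) (Fin Nx) ℂ) (d : Fin Nx → ℂ),
      IsUnit P ∧ A = P⁻¹ * Matrix.diagonal d * P)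
    (hspec : ∀ μ ∈ spectrum ℂ A, 0 ≤ μ.re)
    (Δt : ℝ) (hΔt : 0 < Δt) (α : ℝ) (hα : α ∈ Set.Ioo (0 : ℝ) 1) :
    let It : Matrix (Fin Nt) (Fin Nt) ℂ := 1
    let Ix : Matrix (Fin Nx) (Fin Nx) ℂ := 1
    let AA := (1 / (Δt : ℂ)) • ((It - downShift Nt) ⊗ₖ Ix) +
             (1 / 2 : ℂ) • ((It + downShift Nt) ⊗ₖ A)
    let Pα := (1 / (Δt : ℂ)) • ((It - downShiftAlpha Nt (α : ℂ)) ⊗ₖ Ix) +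
              (1 / 2 : ℂ) • ((It + downShiftAlpha Nt (α : ℂ)) ⊗ₖ A)
    IsUnit Pα ∧ ∀ z ∈ spectrum ℂ (1 - Pα⁻¹ * AA), ‖z‖ ≤ α / (1 - α) := by
  intro It Ix AA Pα
  obtain ⟨P, d, hP, rfl⟩ := hdiag
  have hAA : AA = trapezoidalAllAtOnce Δt (downShift Nt) (P⁻¹ * diagonal d * P) := rfl
  have hPα : Pα = trapezoidalAllAtOnce Δt (downShiftAlpha Nt α) (P⁻¹ * diagonal d * P) := rfl
  have hd : ∀ j, 0 ≤ (d j).re := fun j => hspec _ <| by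
    rw [← hP.unit_spec, ← coe_units_inv, spectrum.units_conjugate', spectrum_diagonal]
    exact ⟨j, rfl⟩
  have ha := fun j => one_div_ofReal_add_div_two_ne_zero hΔt (hd j)
  have hab := fun j => norm_div_two_sub_one_div_ofReal_le hΔt (hd j)
  have hunit : IsUnit Pα := by
    rw [isUnit_iff_isUnit_det, isUnit_iff_ne_zero, hPα, det_trapezoidalAllAtOnce _ _ hP]
    exact Finset.prod_ne_zero_iff.mpr fun j _ =>
      det_smul_one_add_smul_downShiftAlpha_ne_zero (ha j) (hab j) hα
  refine ⟨hunit, fun z hz => ?_⟩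
  rcases eq_or_ne z 0 with rfl | hz0
  · simpa using div_nonneg hα.1.le (sub_nonneg.mpr hα.2.le)
  rw [mem_spectrum_one_sub_inv_mul_iff hunit, hPα, hAA,
    smul_trapezoidalAllAtOnce_add _ _ (smul_downShiftAlpha_add_downShift _ hz0), det_smul,
    det_trapezoidalAllAtOnce _ _ hP, mul_eq_zero, Finset.prod_eq_zero_iff] at hz
  obtain hzpow | ⟨j, -, hj⟩ := hz
  · exact absurd hzpow (pow_ne_zero _ hz0)
  · exact norm_le_of_det_smul_one_add_smul_downShiftAlpha_eq_zero (ha j) (hab j) hα hz0 hj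

/-- ParaDiag-II (Trapezoidal rule): for a diagonalizable `A` whose eigenvalues have
nonnegative real part, the block α-circulant preconditioner `P_α` of the Trapezoidal-rule
all-at-once matrix `𝐀` is invertible and `ρ(I - P_α⁻¹ 𝐀) ≤ α/(1-α)`. -/
theorem paraDiagII_TR_spectralRadius_bound (Nx Nt : ℕ) (hNt : 2 ≤ Nt)
    (A : Matrix (Fin Nx) (Fin Nx) ℂ)
    (hdiag : ∃ (P : Matrix (Fin Nx) (Fin Nx) ℂ) (d : Fin Nx → ℂ),
      IsUnit P ∧ A = P⁻¹ * Matrix.diagonal d * P)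
    (hspec : ∀ μ ∈ spectrum ℂ A, 0 ≤ μ.re)
    (Δt : ℝ) (hΔt : 0 < Δt) (α : ℝ) (hα : α ∈ Set.Ioo (0 : ℝ) 1) :
    let It : Matrix (Fin Nt) (Fin Nt) ℂ := 1
    let Ix : Matrix (Fin Nx) (Fin Nx) ℂ := 1
    let AA := (1 / (Δt : ℂ)) • ((It - downShift Nt) ⊗ₖ Ix) +
             (1 / 2 : ℂ) • ((It + downShift Nt) ⊗ₖ A)
    let Pα := (1 / (Δt : ℂ)) • ((It - downShiftAlpha Nt (α : ℂ)) ⊗ₖ Ix) +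
              (1 / 2 : ℂ) • ((It + downShiftAlpha Nt (α : ℂ)) ⊗ₖ A)
    IsUnit Pα ∧ ∀ z ∈ spectrum ℂ (1 - Pα⁻¹ * AA), ‖z‖ ≤ α / (1 - α) :=
  paraDiagII_TR_spectralRadius_bound_general Nx Nt A hdiag hspec Δt hΔt α hα
end

section
/- Let r ≥ 0 and let A ∈ ℂ^{N_x×N_x} be diagonalizable with every eigenvalue λ of A satisfying Re(λ) ≥ r. Let Δt > 0, N_t ≥ 2 and α ∈ (0,1). Define the Backward-Euler all-at-once matrix 𝐀 = (1/Δt)(I − S) ⊗ I_x + I ⊗ A and its α-circulant approximation P_α = (1/Δt)(I − S_α) ⊗ I_x + I ⊗ A. Then P_α is invertible and, with η := (1 + Δt·r)^{−N_t} ≤ 1, the spectral radius of the iteration matrix satisfies ρ(I − P_α^{-1}𝐀) ≤ α·η/(1 − α·η). (For N_t = T/Δt steps on a time window of length T, η converges to e^{−Tr} as N_t → ∞, giving the convergence factor α e^{−Tr}/(1 − α e^{−Tr}).) -/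
open Matrix
open scoped Kronecker

/-!
Conjugating by `I ⊗ P`, where `A = P⁻¹ diag(d) P`, turns `𝐀` and `P_α` into block-diagonal matrices
whose blocks are `(1/Δt)(w I - S)` and `(1/Δt)(w I - S_α)` with `w = 1 + Δt d_k`, so it suffices to
study one block. There `S_α - S = α e₀ e_{N-1}ᵀ` has rank one, and solving
`(w I - S_α) v = (w^N - α) e₀` by `v = (w^{N-1}, …, w, 1)` shows that
`I - (w I - S_α)⁻¹ (w I - S)` is the rank-one matrix `-(α / (w^N - α)) v e_{N-1}ᵀ`. Its only possible
nonzero eigenvalue is `-α / (w^N - α)`, and `|w| ≥ 1 + Δt r = η^{-1/N}` bounds it by `αη / (1 - αη)`.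
-/

open Polynomial in
theorem spectrum_subset_of_mul_self_eq_smul {𝕜 A : Type*} [Field 𝕜] [Ring A] [Algebra 𝕜 A]
    [Nontrivial A] {a : A} {μ : 𝕜} (h : a * a = μ • a) : spectrum 𝕜 a ⊆ {0, μ} := by
  intro z hz
  have hroot := spectrum.subset_polynomial_aeval a (X * (X - C μ)) ⟨z, hz, rfl⟩
  have hannihilates : aeval a (X * (X - C μ)) = 0 := by
    rw [aeval_mul, aeval_sub, aeval_X, aeval_C, mul_sub, h, ← Algebra.commutes,
      ← Algebra.smul_def, sub_self]
  rw [hannihilates, spectrum.zero_eq, Set.mem_singleton_iff] at hroot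
  simpa [sub_eq_zero] using hroot

namespace Matrix

section Spectrum

variable {K m o : Type*} [Field K] [Fintype m] [DecidableEq m] [Fintype o] [DecidableEq o]

theorem spectrum_vecMulVec_subset [Nonempty m] (u v : m → K) :
    spectrum K (vecMulVec u v) ⊆ {0, v ⬝ᵥ u} :=
  spectrum_subset_of_mul_self_eq_smul <| by rw [vecMulVec_mul_vecMulVec, vecMulVec_smul]

variable (K m o) in
def blockDiagonalAlgHom : (o → Matrix m m K) →ₐ[K] Matrix (m × o) (m × o) K :=
  { blockDiagonalRingHom m o K with
    commutes' := fun r => by simp [Algebra.algebraMap_eq_smul_one] }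

theorem spectrum_blockDiagonal_subset (f : o → Matrix m m K) :
    spectrum K (blockDiagonal f) ⊆ ⋃ k, spectrum K (f k) :=
  (AlgHom.spectrum_apply_subset (blockDiagonalAlgHom K m o) f).trans (Pi.spectrum_eq f).le

theorem isUnit_blockDiagonal {f : o → Matrix m m K} (hf : ∀ k, IsUnit (f k)) :
    IsUnit (blockDiagonal f) :=
  (Pi.isUnit_iff.2 hf).map (blockDiagonalRingHom m o K)

theorem isUnit_and_one_sub_inv_mul_eq {T T₀ M : Matrix m m K} (hT₀ : IsUnit T₀)
    (h : T * (1 - M) = T₀) : IsUnit T ∧ 1 - T⁻¹ * T₀ = M := by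
  have hT : IsUnit T := isUnit_of_mul_isUnit_left (h ▸ hT₀)
  refine ⟨hT, ?_⟩
  rw [← h, ← Matrix.mul_assoc, nonsing_inv_mul _ ((isUnit_iff_isUnit_det T).1 hT), Matrix.one_mul,
    sub_sub_cancel]

theorem isUnit_and_spectrum_one_sub_inv_mul_subset {U : Matrix (m × o) (m × o) K} (hU : IsUnit U)
    {T T₀ M : o → Matrix m m K} (hT₀ : ∀ k, IsUnit (T₀ k)) (h : ∀ k, T k * (1 - M k) = T₀ k) :
    IsUnit (U⁻¹ * blockDiagonal T * U) ∧
      spectrum K (1 - (U⁻¹ * blockDiagonal T * U)⁻¹ * (U⁻¹ * blockDiagonal T₀ * U)) ⊆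
        ⋃ k, spectrum K (M k) := by
  have hblocks : blockDiagonal T * (1 - blockDiagonal M) = blockDiagonal T₀ := by
    rw [← blockDiagonal_one, ← blockDiagonal_sub, ← blockDiagonal_mul]
    exact congrArg _ (funext h)
  have hfactor : U⁻¹ * blockDiagonal T * U * (1 - U⁻¹ * blockDiagonal M * U) =
      U⁻¹ * blockDiagonal T₀ * U := by
    rw [← hblocks]
    simp only [mul_sub, sub_mul, mul_one, mul_assoc,
      mul_nonsing_inv_cancel_left (h := (isUnit_iff_isUnit_det U).1 hU)]
  obtain ⟨hunit, hM⟩ := isUnit_and_one_sub_inv_mul_eq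
    ((isUnit_nonsing_inv_iff.2 hU |>.mul (isUnit_blockDiagonal hT₀)).mul hU) hfactor
  refine ⟨hunit, ?_⟩
  rw [hM, ← hU.unit_spec, ← coe_units_inv, spectrum.units_conjugate']
  exact spectrum_blockDiagonal_subset M

end Spectrum

section Kronecker

variable {R m o : Type*} [CommRing R] [DecidableEq m] [DecidableEq o]

theorem kronecker_one_add_one_kronecker_diagonal (X : Matrix m m R) (d : o → R) :
    X ⊗ₖ 1 + 1 ⊗ₖ diagonal d = blockDiagonal fun k => X + d k • 1 := by
  ext ⟨i, k⟩ ⟨j, k'⟩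
  by_cases hk : k = k' <;> by_cases hij : i = j <;> simp [blockDiagonal_apply, hk, hij]

variable [Fintype m] [Fintype o]

theorem isUnit_one_kronecker {P : Matrix o o R} (hP : IsUnit P) :
    IsUnit ((1 : Matrix m m R) ⊗ₖ P) := by
  rw [isUnit_iff_isUnit_det, det_kronecker, det_one, one_pow, one_mul]
  exact ((isUnit_iff_isUnit_det P).1 hP).pow _

theorem kronecker_one_add_one_kronecker_conj (X : Matrix m m R) {P : Matrix o o R}
    (hP : IsUnit P) (B : Matrix o o R) :
    X ⊗ₖ 1 + 1 ⊗ₖ (P⁻¹ * B * P) = (1 ⊗ₖ P)⁻¹ * (X ⊗ₖ 1 + 1 ⊗ₖ B) * (1 ⊗ₖ P) := by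
  rw [inv_kronecker, inv_one, Matrix.mul_add, Matrix.add_mul, ← mul_kronecker_mul,
    ← mul_kronecker_mul, ← mul_kronecker_mul, ← mul_kronecker_mul]
  simp only [Matrix.one_mul, Matrix.mul_one, nonsing_inv_mul _ ((isUnit_iff_isUnit_det P).1 hP)]

end Kronecker

end Matrix

theorem downShiftAlpha_eq_add_vecMulVec (n : ℕ) (α : ℂ) :
    downShiftAlpha (n + 1) α =
      downShift (n + 1) + α • vecMulVec (Pi.single 0 1) (Pi.single (Fin.last n) 1) := by
  ext j k
  simp only [downShiftAlpha, Matrix.add_apply, Matrix.smul_apply, of_apply, vecMulVec_apply,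
    Pi.single_apply, Fin.ext_iff, Fin.val_zero, Fin.val_last, add_left_inj, ite_and, ite_mul,
    one_mul, zero_mul]

theorem downShift_mulVec_zero {n : ℕ} (v : Fin (n + 1) → ℂ) : (downShift (n + 1) *ᵥ v) 0 = 0 := by
  simp [downShift, mulVec, dotProduct]

theorem downShift_mulVec_succ {n : ℕ} (v : Fin (n + 1) → ℂ) (j : Fin n) :
    (downShift (n + 1) *ᵥ v) j.succ = v j.castSucc := by
  rw [mulVec, dotProduct, Finset.sum_eq_single j.castSucc]
  · simp [downShift]
  · intro k _ hk
    simp [downShift, Fin.ext_iff] at hk ⊢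
    omega
  · simp

theorem isUnit_smul_one_sub_downShift {w : ℂ} (hw : w ≠ 0) (N : ℕ) :
    IsUnit (w • 1 - downShift N) := by
  have hlower : (w • 1 - downShift N).IsLowerTriangular := by
    intro i j hij
    rw [OrderDual.toDual_lt_toDual, Fin.lt_def] at hij
    have hne : (i : ℕ) ≠ j := hij.ne
    have hne' : (i : ℕ) ≠ j + 1 := by omega
    simp [downShift, one_apply, Fin.ext_iff, hne, hne']
  rw [isUnit_iff_isUnit_det, det_of_isLowerTriangular _ hlower]
  simp [downShift, hw]

def powVec (n : ℕ) (w : ℂ) : Fin (n + 1) → ℂ := fun i => w ^ (n - i)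

theorem smul_one_sub_downShiftAlpha_mulVec_powVec (n : ℕ) (w α : ℂ) :
    (w • 1 - downShiftAlpha (n + 1) α) *ᵥ powVec n w = (w ^ (n + 1) - α) • Pi.single 0 1 := by
  ext i
  rw [sub_mulVec, smul_mulVec, one_mulVec, downShiftAlpha_eq_add_vecMulVec, add_mulVec,
    smul_mulVec, vecMulVec_mulVec, single_dotProduct]
  cases i using Fin.cases with
  | zero => simp [downShift_mulVec_zero, powVec, pow_succ']
  | succ j =>
    have hexp : n - j = n - (j + 1) + 1 := by omega
    simp [downShift_mulVec_succ, powVec, hexp, pow_succ, mul_comm]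

noncomputable def circulantCorrection (n : ℕ) (w α : ℂ) : Matrix (Fin (n + 1)) (Fin (n + 1)) ℂ :=
  vecMulVec (-(α / (w ^ (n + 1) - α)) • powVec n w) (Pi.single (Fin.last n) 1)

theorem smul_one_sub_downShiftAlpha_mul_one_sub_circulantCorrection {n : ℕ} {w α : ℂ}
    (hδ : w ^ (n + 1) ≠ α) :
    (w • 1 - downShiftAlpha (n + 1) α) * (1 - circulantCorrection n w α) =
      w • 1 - downShift (n + 1) := by
  rw [mul_sub, mul_one, circulantCorrection, mul_vecMulVec, mulVec_smul,
    smul_one_sub_downShiftAlpha_mulVec_powVec, smul_smul, neg_mul,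
    div_mul_cancel₀ _ (sub_ne_zero.2 hδ), smul_vecMulVec, neg_smul, downShiftAlpha_eq_add_vecMulVec]
  abel

theorem isUnit_and_smul_mul_one_sub_circulantCorrection {n : ℕ} {c w α : ℂ} (hc : c ≠ 0)
    (hw : 1 ≤ ‖w‖) (hα : ‖α‖ < 1) :
    IsUnit (c • (w • 1 - downShift (n + 1))) ∧
      c • (w • 1 - downShiftAlpha (n + 1) α) * (1 - circulantCorrection n w α) =
        c • (w • 1 - downShift (n + 1)) := by
  have hw₀ : w ≠ 0 := norm_pos_iff.1 (one_pos.trans_le hw)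
  have hδ : w ^ (n + 1) ≠ α := fun h => by
    have := one_le_pow₀ hw (n := n + 1)
    rw [← norm_pow, h] at this
    linarith
  refine ⟨?_, by rw [smul_mul_assoc, smul_one_sub_downShiftAlpha_mul_one_sub_circulantCorrection hδ]⟩
  rw [Algebra.smul_def]
  exact (hc.isUnit.map _).mul (isUnit_smul_one_sub_downShift hw₀ _)

theorem spectrum_circulantCorrection_subset (n : ℕ) (w α : ℂ) :
    spectrum ℂ (circulantCorrection n w α) ⊆ {0, -(α / (w ^ (n + 1) - α))} := by
  refine (spectrum_vecMulVec_subset _ _).trans ?_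
  simp [single_dotProduct, powVec]

theorem backwardEuler_allAtOnce_eq_conj_blockDiagonal {m o : Type*} [Fintype m] [DecidableEq m]
    [Fintype o] [DecidableEq o] {h : ℂ} (hh : h ≠ 0) (X : Matrix m m ℂ) {P : Matrix o o ℂ}
    (hP : IsUnit P) (d : o → ℂ) :
    (1 / h) • ((1 - X) ⊗ₖ 1) + 1 ⊗ₖ (P⁻¹ * diagonal d * P) =
      (1 ⊗ₖ P)⁻¹ * blockDiagonal (fun k => (1 / h) • ((1 + h * d k) • 1 - X)) * (1 ⊗ₖ P) := by
  rw [← smul_kronecker, kronecker_one_add_one_kronecker_conj _ hP,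
    kronecker_one_add_one_kronecker_diagonal]
  congr 3
  funext k
  rw [smul_sub, smul_sub, smul_smul, show 1 / h * (1 + h * d k) = 1 / h + d k by field_simp,
    add_smul]
  abel

theorem le_norm_one_add_mul {Δt r : ℝ} {d : ℂ} (hΔt : 0 ≤ Δt) (hd : r ≤ d.re) :
    1 + Δt * r ≤ ‖1 + Δt * d‖ :=
  calc 1 + Δt * r ≤ (1 + Δt * d).re := by simpa using mul_le_mul_of_nonneg_left hd hΔt
    _ ≤ ‖1 + Δt * d‖ := Complex.re_le_norm _

theorem norm_div_sub_le {u : ℂ} {α η : ℝ} (hα : 0 ≤ α) (hη : 0 < η) (hαη : α * η < 1)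
    (hu : η⁻¹ ≤ ‖u‖) : ‖(α : ℂ) / (u - α)‖ ≤ α * η / (1 - α * η) := by
  have hnorm_α : ‖(α : ℂ)‖ = α := by rw [Complex.norm_real, Real.norm_of_nonneg hα]
  have hgap : (1 - α * η) / η ≤ ‖u - α‖ :=
    calc (1 - α * η) / η = η⁻¹ - ‖(α : ℂ)‖ := by rw [hnorm_α]; field_simp
      _ ≤ ‖u‖ - ‖(α : ℂ)‖ := by gcongr
      _ ≤ ‖u - α‖ := norm_sub_norm_le _ _
  calc ‖(α : ℂ) / (u - α)‖ = α / ‖u - α‖ := by rw [norm_div, hnorm_α]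
    _ ≤ α / ((1 - α * η) / η) := div_le_div_of_nonneg_left hα (by positivity) hgap
    _ = α * η / (1 - α * η) := div_div_eq_mul_div _ _ _

/-- ParaDiag-II (Backward-Euler): for a diagonalizable `A` whose eigenvalues have
real part at least `r ≥ 0`, the block α-circulant preconditioner `P_α` of the
Backward-Euler all-at-once matrix `𝐀` is invertible and, with
`η = (1 + Δt·r)^{-N_t} ≤ 1`, the iteration matrix satisfies
`ρ(I - P_α⁻¹ 𝐀) ≤ αη/(1 - αη)`. -/
theorem paraDiagII_BE_spectralRadius_bound (Nx Nt : ℕ) (hNt : 2 ≤ Nt)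
    (r : ℝ) (hr : 0 ≤ r)
    (A : Matrix (Fin Nx) (Fin Nx) ℂ)
    (hdiag : ∃ (P : Matrix (Fin Nx) (Fin Nx) ℂ) (d : Fin Nx → ℂ),
      IsUnit P ∧ A = P⁻¹ * Matrix.diagonal d * P)
    (hspec : ∀ μ ∈ spectrum ℂ A, r ≤ μ.re)
    (Δt : ℝ) (hΔt : 0 < Δt) (α : ℝ) (hα : α ∈ Set.Ioo (0 : ℝ) 1) :
    let It : Matrix (Fin Nt) (Fin Nt) ℂ := 1
    let Ix : Matrix (Fin Nx) (Fin Nx) ℂ := 1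
    let AA := (1 / (Δt : ℂ)) • ((It - downShift Nt) ⊗ₖ Ix) + It ⊗ₖ A
    let Pα := (1 / (Δt : ℂ)) • ((It - downShiftAlpha Nt (α : ℂ)) ⊗ₖ Ix) + It ⊗ₖ A
    let η : ℝ := ((1 + Δt * r) ^ Nt)⁻¹
    η ≤ 1 ∧ IsUnit Pα ∧
      ∀ z ∈ spectrum ℂ (1 - Pα⁻¹ * AA), ‖z‖ ≤ α * η / (1 - α * η) := by
  intro It Ix AA Pα η
  obtain ⟨P, d, hP, rfl⟩ := hdiag
  obtain ⟨n, rfl⟩ : ∃ n, Nt = n + 1 := ⟨Nt - 1, by omega⟩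
  obtain ⟨hα₀, hα₁⟩ := hα
  have hre (k : Fin Nx) : r ≤ (d k).re := hspec _ <| by
    rw [← hP.unit_spec, ← coe_units_inv, spectrum.units_conjugate', spectrum_diagonal]
    exact ⟨k, rfl⟩
  set w : Fin Nx → ℂ := fun k => 1 + Δt * d k
  have hw (k : Fin Nx) : 1 + Δt * r ≤ ‖w k‖ := le_norm_one_add_mul hΔt.le (hre k)
  have hstep : 1 ≤ 1 + Δt * r := le_add_of_nonneg_right (mul_nonneg hΔt.le hr)
  have hη : 0 < η ∧ η ≤ 1 := ⟨by positivity, inv_le_one_of_one_le₀ (one_le_pow₀ hstep)⟩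
  have hΔt' : (Δt : ℂ) ≠ 0 := by exact_mod_cast hΔt.ne'
  have hblock (k : Fin Nx) := isUnit_and_smul_mul_one_sub_circulantCorrection (n := n) (α := α)
    (one_div_ne_zero hΔt') (hstep.trans (hw k)) (by simpa [abs_of_pos hα₀] using hα₁)
  obtain ⟨hunit, hsub⟩ := isUnit_and_spectrum_one_sub_inv_mul_subset (isUnit_one_kronecker hP)
    (fun k => (hblock k).1) (fun k => (hblock k).2)
  have hPα : Pα = _ := backwardEuler_allAtOnce_eq_conj_blockDiagonal hΔt' (downShiftAlpha _ α) hP d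
  have hAA : AA = _ := backwardEuler_allAtOnce_eq_conj_blockDiagonal hΔt' (downShift _) hP d
  rw [hPα, hAA]
  refine ⟨hη.2, hunit, fun z hz => ?_⟩
  obtain ⟨k, hk⟩ := Set.mem_iUnion.1 (hsub hz)
  have hwη : η⁻¹ ≤ ‖w k ^ (n + 1)‖ := by
    rw [inv_inv, norm_pow]
    exact pow_le_pow_left₀ (by positivity) (hw k) _
  have hbound := norm_div_sub_le hα₀.le hη.1 (by nlinarith) hwη
  rcases spectrum_circulantCorrection_subset n (w k) α hk with rfl | rfl
  · simpa using (norm_nonneg _).trans hbound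
  · rwa [norm_neg]
end

section
/- Let m, N_t ≥ 1 and r ≥ 1, and let a_0,…,a_r, b_0,…,b_r ∈ ℝ be the coefficients of a linear r-step method. Let P ∈ ℂ^{m×m} be invertible, A = P^{-1} D_A P with D_A = diag(λ_1,…,λ_m), and Δt > 0; set z_i = Δt·λ_i and assume for every i that a_0 + z_i b_0 ≠ 0 and that the characteristic polynomial p(s; z_i) = Σ_{j=0}^{r} (a_j + z_i b_j) s^{r−j} satisfies the root condition: every root s of p(·; z_i) has |s| < 1, or |s| = 1 and is a simple root. Define the all-at-once matrix 𝐀 = (Σ_{j=0}^{r} a_j S^j) ⊗ I_m + Δt (Σ_{j=0}^{r} b_j S^j) ⊗ A and its α-circulant approximation P_α = (Σ_{j=0}^{r} a_j S_α^j) ⊗ I_m + Δt (Σ_{j=0}^{r} b_j S_α^j) ⊗ A. Then there exists a constant c ≥ 1, depending only on the method coefficients {a_j, b_j} and the values {z_i} but not on α, N_t or the iteration index, such that for every α ∈ (0, 1/c), P_α is invertible and the errors err^k = u^k − u of the stationary iteration P_α u^{k+1} = (P_α − 𝐀)u^k + b satisfy ‖(I_{N_t} ⊗ P) err^{k+1}‖_∞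 ≤ (cα/(1−cα))·‖(I_{N_t} ⊗ P) err^k‖_∞ for all k ≥ 1; in particular the iteration converges linearly whenever cα/(1−cα) < 1. -/
open Matrix Polynomial Finset
open scoped Kronecker

namespace ParaDiagAux


/-- Partial sums of coefficient norms are uniformly bounded. -/
def PartialBdd (f : PowerSeries ℂ) : Prop :=
  ∃ C : ℝ, 0 ≤ C ∧ ∀ n : ℕ, ∑ j ∈ range (n + 1), ‖PowerSeries.coeff j f‖ ≤ C

/-- Coefficients are uniformly bounded. -/
def CoeffBdd (f : PowerSeries ℂ) : Prop :=
  ∃ G : ℝ, 0 ≤ G ∧ ∀ n : ℕ, ‖PowerSeries.coeff n f‖ ≤ G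

lemma geomInv_mul (x : ℂ) (hx : x ≠ 0) :
    ((Polynomial.X - C x : ℂ[X]) : PowerSeries ℂ) * PowerSeries.mk (fun n => -(x⁻¹) ^ (n + 1)) = 1 := by
  ext n
  rw [Polynomial.coe_sub, Polynomial.coe_X, Polynomial.coe_C, sub_mul]
  cases n with
  | zero =>
      simp [PowerSeries.coeff_zero_X_mul, PowerSeries.coeff_C_mul, PowerSeries.coeff_mk]
      field_simp
  | succ n =>
      simp only [map_sub, PowerSeries.coeff_succ_X_mul, PowerSeries.coeff_C_mul,
        PowerSeries.coeff_mk, PowerSeries.coeff_one]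
      have : x * -x⁻¹ ^ (n + 1 + 1) = -x⁻¹ ^ (n + 1) := by
        rw [pow_succ' x⁻¹ (n+1)]
        field_simp
      rw [this]
      simp

lemma geomInv_partialBdd (x : ℂ) (hx : 1 < ‖x‖) :
    PartialBdd (PowerSeries.mk (fun n => -(x⁻¹ : ℂ) ^ (n + 1))) := by
  set ρ : ℝ := ‖x⁻¹‖ with hρ
  have hρ0 : 0 ≤ ρ := norm_nonneg _
  have hρ1 : ρ < 1 := by
    rw [hρ, norm_inv]
    have h1 : (1:ℝ) < ‖x‖ := hx
    rw [inv_lt_one_iff₀]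
    right; exact h1
  refine ⟨1 / (1 - ρ), by apply div_nonneg <;> linarith, fun n => ?_⟩
  have key : ∀ N : ℕ, ∑ j ∈ range N, ρ ^ j ≤ 1 / (1 - ρ) := by
    intro N
    rw [geom_sum_eq (by linarith : ρ ≠ 1),
      show (ρ ^ N - 1) / (ρ - 1) = (1 - ρ ^ N) / (1 - ρ) by rw [← neg_div_neg_eq]; ring_nf]
    have hN : (0:ℝ) ≤ ρ ^ N := by positivity
    have h2 : (0:ℝ) < 1 - ρ := by linarith
    rw [div_le_div_iff₀ h2 h2]
    nlinarith
  calc ∑ j ∈ range (n + 1), ‖PowerSeries.coeff j (PowerSeries.mk (fun k => -(x⁻¹:ℂ) ^ (k + 1)))‖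
      = ∑ j ∈ range (n + 1), ρ ^ (j + 1) := by
        apply Finset.sum_congr rfl
        intro j _
        rw [PowerSeries.coeff_mk, norm_neg, norm_pow]
    _ ≤ ∑ j ∈ range (n + 1), ρ ^ j := by
        apply Finset.sum_le_sum
        intro j _
        exact pow_le_pow_of_le_one hρ0 hρ1.le (by omega)
    _ ≤ 1 / (1 - ρ) := key _

lemma poly_partialBdd (p : ℂ[X]) : PartialBdd (p : PowerSeries ℂ) := by
  refine ⟨∑ j ∈ range (p.natDegree + 1), ‖p.coeff j‖, by positivity, fun n => ?_⟩
  simp only [Polynomial.coeff_coe]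
  rcases le_or_gt (n + 1) (p.natDegree + 1) with h | h
  · apply Finset.sum_le_sum_of_subset_of_nonneg
    · exact Finset.range_subset_range.mpr h
    · intro i _ _; positivity
  · rw [← Finset.sum_subset (Finset.range_subset_range.mpr h.le)]
    intro i _ hi
    simp only [Finset.mem_range, not_lt] at hi
    rw [Polynomial.coeff_eq_zero_of_natDegree_lt (by omega), norm_zero]

lemma mul_coeffBdd {f g : PowerSeries ℂ} (hf : PartialBdd f) (hg : CoeffBdd g) :
    CoeffBdd (f * g) := by
  obtain ⟨C, hC0, hC⟩ := hf
  obtain ⟨G, hG0, hG⟩ := hg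
  refine ⟨C * G, by positivity, fun n => ?_⟩
  rw [PowerSeries.coeff_mul]
  calc ‖∑ p ∈ antidiagonal n, PowerSeries.coeff p.1 f * PowerSeries.coeff p.2 g‖
      ≤ ∑ p ∈ antidiagonal n, ‖PowerSeries.coeff p.1 f * PowerSeries.coeff p.2 g‖ :=
        norm_sum_le _ _
    _ ≤ ∑ p ∈ antidiagonal n, ‖PowerSeries.coeff p.1 f‖ * G := by
        apply Finset.sum_le_sum
        intro p _
        rw [norm_mul]
        exact mul_le_mul_of_nonneg_left (hG _) (norm_nonneg _)
    _ = (∑ p ∈ antidiagonal n, ‖PowerSeries.coeff p.1 f‖) * G := by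
        rw [Finset.sum_mul]
    _ ≤ C * G := by
        apply mul_le_mul_of_nonneg_right _ hG0
        rw [Finset.Nat.sum_antidiagonal_eq_sum_range_succ_mk]
        exact hC n
  
lemma add_coeffBdd {f g : PowerSeries ℂ} (hf : CoeffBdd f) (hg : CoeffBdd g) :
    CoeffBdd (f + g) := by
  obtain ⟨G1, h10, h1⟩ := hf
  obtain ⟨G2, h20, h2⟩ := hg
  refine ⟨G1 + G2, by positivity, fun n => ?_⟩
  rw [map_add]
  exact le_trans (norm_add_le _ _) (add_le_add (h1 n) (h2 n))

lemma geomInv_coeffBdd (x : ℂ) (hx : 1 ≤ ‖x‖) :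
    CoeffBdd (PowerSeries.mk (fun n => -(x⁻¹ : ℂ) ^ (n + 1))) := by
  refine ⟨1, zero_le_one, fun n => ?_⟩
  rw [PowerSeries.coeff_mk, norm_neg, norm_pow, norm_inv]
  have : (1:ℝ) ≤ ‖x‖ := hx
  apply pow_le_one₀ (by positivity)
  rw [inv_le_one_iff₀]; right; exact this

/-- Bezout identity against a non-root linear factor. -/
lemma bezout_X_sub_C (x : ℂ) (q : ℂ[X]) (h : ¬ q.IsRoot x) :
    ∃ u v : ℂ[X], u * (Polynomial.X - C x) + v * q = 1 := by
  obtain ⟨w, hw⟩ := Polynomial.X_sub_C_dvd_sub_C_eval (a := x) (p := q)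
  set e := q.eval x with he
  have he0 : e ≠ 0 := h
  refine ⟨-(C e⁻¹ * w), C e⁻¹, ?_⟩
  have : q - C e = (Polynomial.X - C x) * w := hw.symm ▸ by rw [← hw]
  have hq : q = (Polynomial.X - C x) * w + C e := by linear_combination this
  rw [hq]
  ring_nf
  rw [← Polynomial.C_mul, inv_mul_cancel₀ he0]
  simp

/-- Main induction: bounded inverse coefficients under the root condition. -/
theorem bdd_inv_coeff (q : ℂ[X]) (hq : q ≠ 0)
    (hroots : ∀ x : ℂ, q.IsRoot x →
      1 < ‖x‖ ∨ (‖x‖ = 1 ∧ q.rootMultiplicity x = 1)) :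
    ∃ (h : PowerSeries ℂ) (G : ℝ), 0 ≤ G ∧ (q : PowerSeries ℂ) * h = 1 ∧
      ∀ n, ‖PowerSeries.coeff n h‖ ≤ G := by
  have H : ∀ d (q : ℂ[X]), q ≠ 0 → (∀ x : ℂ, q.IsRoot x →
      1 < ‖x‖ ∨ (‖x‖ = 1 ∧ q.rootMultiplicity x = 1)) →
      q.natDegree = d →
      ∃ (h : PowerSeries ℂ) (G : ℝ), 0 ≤ G ∧ (q : PowerSeries ℂ) * h = 1 ∧
        ∀ n, ‖PowerSeries.coeff n h‖ ≤ G := by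
    intro d
    induction d using Nat.strong_induction_on with
    | _ d IH =>
    intro q hq hroots hd
    rcases Nat.eq_zero_or_pos d with hd0 | hdpos
    · -- constant polynomial
      subst hd0
      set c0 := q.coeff 0 with hc0
      have : q = C c0 := Polynomial.eq_C_of_natDegree_eq_zero hd
      have hc : c0 ≠ 0 := fun h0 => hq (by rw [this, h0, map_zero])
      refine ⟨PowerSeries.C c0⁻¹, ‖c0⁻¹‖, norm_nonneg _, ?_, ?_⟩
      · rw [this, Polynomial.coe_C, ← _root_.map_mul, mul_inv_cancel₀ hc, _root_.map_one]
      · intro n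
        rw [PowerSeries.coeff_C]
        split <;> simp [norm_nonneg]
    · -- there is a root
      obtain ⟨x, hx⟩ := Complex.exists_root (f := q)
        (by rw [Polynomial.degree_eq_natDegree hq, hd]; exact_mod_cast hdpos)
      obtain ⟨q', hq'⟩ := Polynomial.dvd_iff_isRoot.mpr hx
      have hq'0 : q' ≠ 0 := fun h0 => hq (by rw [hq', h0, mul_zero])
      have hXx : (Polynomial.X - C x : ℂ[X]) ≠ 0 := Polynomial.X_sub_C_ne_zero x
      have hdeg' : q'.natDegree = d - 1 := by
        have := Polynomial.natDegree_mul hXx hq'0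
        rw [← hq', hd, Polynomial.natDegree_X_sub_C] at this
        omega
      have hroots' : ∀ y : ℂ, q'.IsRoot y →
          1 < ‖y‖ ∨ (‖y‖ = 1 ∧ q'.rootMultiplicity y = 1) := by
        intro y hy
        have hyq : q.IsRoot y := by
          rw [hq']; simp [Polynomial.IsRoot, hy.eq_zero]
        rcases hroots y hyq with h1 | ⟨h1, h2⟩
        · exact Or.inl h1
        · refine Or.inr ⟨h1, ?_⟩
          have hmul : rootMultiplicity y q =
              rootMultiplicity y (Polynomial.X - C x) + rootMultiplicity y q' := by
            rw [hq']; exact Polynomial.rootMultiplicity_mul (by rw [← hq']; exact hq)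
          have h1' : 1 ≤ rootMultiplicity y q' :=
            (Polynomial.rootMultiplicity_pos hq'0).mpr hy
          omega
      obtain ⟨h', G', hG'0, hmul', hbd'⟩ := IH (d - 1) (by omega) q' hq'0 hroots' hdeg'
      -- root condition at x
      rcases hroots x hx with hbig | ⟨hone, hsimple⟩
      · -- |x| > 1 : multiply inverses
        have hx0 : x ≠ 0 := by
          intro h0; rw [h0] at hbig; simp at hbig; linarith
        refine ⟨PowerSeries.mk (fun n => -(x⁻¹ : ℂ) ^ (n + 1)) * h', ?_⟩
        obtain ⟨Cg, hCg0, hCg⟩ := geomInv_partialBdd x hbig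
        obtain ⟨G, hG0, hG⟩ := mul_coeffBdd ⟨Cg, hCg0, hCg⟩ ⟨G', hG'0, hbd'⟩
        refine ⟨G, hG0, ?_, hG⟩
        rw [hq', Polynomial.coe_mul]
        calc ((Polynomial.X - C x : ℂ[X]) : PowerSeries ℂ) * (q' : PowerSeries ℂ) *
              (PowerSeries.mk (fun n => -(x⁻¹ : ℂ) ^ (n + 1)) * h')
            = (((Polynomial.X - C x : ℂ[X]) : PowerSeries ℂ) *
                PowerSeries.mk (fun n => -(x⁻¹ : ℂ) ^ (n + 1))) * ((q' : PowerSeries ℂ) * h') := by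
              ring
          _ = 1 := by rw [geomInv_mul x hx0, hmul', one_mul]
      · -- |x| = 1, simple root: Bezout
        have hx0 : x ≠ 0 := by
          intro h0; rw [h0] at hone; simp at hone
        have hnotroot : ¬ q'.IsRoot x := by
          intro hroot
          have hmul : rootMultiplicity x q =
              rootMultiplicity x (Polynomial.X - C x) + rootMultiplicity x q' := by
            rw [hq']; exact Polynomial.rootMultiplicity_mul (by rw [← hq']; exact hq)
          rw [Polynomial.rootMultiplicity_X_sub_C_self] at hmul
          have := (Polynomial.rootMultiplicity_pos hq'0).mpr hroot
          omega
        obtain ⟨u, v, huv⟩ := bezout_X_sub_C x q' hnotroot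
        -- inverse of q = (X - x) q' is  u * h' + v * h0
        set h0 : PowerSeries ℂ := PowerSeries.mk (fun n => -(x⁻¹ : ℂ) ^ (n + 1)) with hh0
        have hx1 : (1:ℝ) ≤ ‖x‖ := hone.ge
        obtain ⟨G, hG0, hG⟩ := add_coeffBdd
          (mul_coeffBdd (poly_partialBdd u) ⟨G', hG'0, hbd'⟩)
          (mul_coeffBdd (poly_partialBdd v) (geomInv_coeffBdd x hx1))
        refine ⟨(u : PowerSeries ℂ) * h' + (v : PowerSeries ℂ) * h0, G, hG0, ?_, hG⟩
        have e1 : ((Polynomial.X - C x : ℂ[X]) : PowerSeries ℂ) * h0 = 1 := geomInv_mul x hx0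
        have e2 : (q' : PowerSeries ℂ) * h' = 1 := hmul'
        have e3 : ((u : ℂ[X]) * (Polynomial.X - C x) + v * q' : ℂ[X]) = 1 := huv
        have e3' : (u : PowerSeries ℂ) * ((Polynomial.X - C x : ℂ[X]) : PowerSeries ℂ)
            + (v : PowerSeries ℂ) * (q' : PowerSeries ℂ) = 1 := by
          have := congrArg (fun p : ℂ[X] => (p : PowerSeries ℂ)) e3
          simpa [Polynomial.coe_add, Polynomial.coe_mul] using this
        rw [hq', Polynomial.coe_mul]
        calc ((Polynomial.X - C x : ℂ[X]) : PowerSeries ℂ) * (q' : PowerSeries ℂ) *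
              ((u : PowerSeries ℂ) * h' + (v : PowerSeries ℂ) * h0)
            = ((q' : PowerSeries ℂ) * h') * ((u : PowerSeries ℂ) *
                ((Polynomial.X - C x : ℂ[X]) : PowerSeries ℂ))
              + (((Polynomial.X - C x : ℂ[X]) : PowerSeries ℂ) * h0) *
                ((v : PowerSeries ℂ) * (q' : PowerSeries ℂ)) := by ring
          _ = (u : PowerSeries ℂ) * ((Polynomial.X - C x : ℂ[X]) : PowerSeries ℂ)
              + (v : PowerSeries ℂ) * (q' : PowerSeries ℂ) := by rw [e1, e2]; ring
          _ = 1 := e3'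
  exact H q.natDegree q hq hroots rfl



variable {N : ℕ}

/-- The corner matrix E. -/
noncomputable def cornerE (N : ℕ) : Matrix (Fin N) (Fin N) ℂ :=
  Matrix.of fun j k : Fin N => if (j : ℕ) = 0 ∧ (k : ℕ) + 1 = N then (1 : ℂ) else 0

lemma downShiftAlpha_eq (α : ℂ) : downShiftAlpha N α = downShift N + α • cornerE N := rfl

lemma sum_ite_le {P : Fin N → Prop} [DecidablePred P]
    (hP : ∀ k k', P k → P k' → k = k') {c : ℝ} (hc : 0 ≤ c) :
    ∑ l : Fin N, (if P l then c else 0) ≤ c := by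
  classical
  rw [← Finset.sum_filter, Finset.sum_const]
  have hcard : (Finset.univ.filter P).card ≤ 1 := by
    rw [Finset.card_le_one]
    intro x hx y hy
    exact hP x y (Finset.mem_filter.mp hx).2 (Finset.mem_filter.mp hy).2
  rcases Nat.le_one_iff_eq_zero_or_eq_one.mp hcard with h | h <;> rw [h] <;> simp [hc]

lemma rowsum_downShift (n : Fin N) : ∑ l : Fin N, ‖downShift N n l‖ ≤ 1 := by
  have : ∀ l : Fin N, ‖downShift N n l‖ = if (n:ℕ) = (l:ℕ) + 1 then (1:ℝ) else 0 := by
    intro l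
    simp only [downShift, Matrix.of_apply]
    split <;> simp
  simp_rw [this]
  exact sum_ite_le (fun k k' hk hk' => by apply Fin.ext; omega) zero_le_one

lemma rowsum_cornerE (n : Fin N) : ∑ l : Fin N, ‖cornerE N n l‖ ≤ 1 := by
  have : ∀ l : Fin N, ‖cornerE N n l‖ = if ((n:ℕ) = 0 ∧ (l:ℕ) + 1 = N) then (1:ℝ) else 0 := by
    intro l
    simp only [cornerE, Matrix.of_apply]
    split <;> simp
  simp_rw [this]
  exact sum_ite_le (fun k k' hk hk' => by apply Fin.ext; omega) zero_le_one

lemma rowsum_mul_le {M1 M2 : Matrix (Fin N) (Fin N) ℂ} {B1 B2 : ℝ} (hB2 : 0 ≤ B2)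
    (h1 : ∀ n, ∑ k : Fin N, ‖M1 n k‖ ≤ B1) (h2 : ∀ k, ∑ l : Fin N, ‖M2 k l‖ ≤ B2) :
    ∀ n, ∑ l : Fin N, ‖(M1 * M2) n l‖ ≤ B1 * B2 := by
  intro n
  calc ∑ l : Fin N, ‖(M1 * M2) n l‖
      ≤ ∑ l : Fin N, ∑ k : Fin N, ‖M1 n k‖ * ‖M2 k l‖ := by
        apply Finset.sum_le_sum
        intro l _
        rw [Matrix.mul_apply]
        refine le_trans (norm_sum_le _ _) ?_
        apply Finset.sum_le_sum
        intro k _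
        rw [norm_mul]
    _ = ∑ k : Fin N, ‖M1 n k‖ * ∑ l : Fin N, ‖M2 k l‖ := by
        rw [Finset.sum_comm]
        simp_rw [Finset.mul_sum]
    _ ≤ ∑ k : Fin N, ‖M1 n k‖ * B2 := by
        apply Finset.sum_le_sum
        intro k _
        exact mul_le_mul_of_nonneg_left (h2 k) (norm_nonneg _)
    _ = (∑ k : Fin N, ‖M1 n k‖) * B2 := by rw [Finset.sum_mul]
    _ ≤ B1 * B2 := mul_le_mul_of_nonneg_right (h1 n) hB2

lemma rowsum_downShiftAlpha {α : ℝ} (hα : 0 ≤ α) (n : Fin N) :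
    ∑ l : Fin N, ‖downShiftAlpha N (α:ℂ) n l‖ ≤ 1 + α := by
  calc ∑ l : Fin N, ‖downShiftAlpha N (α:ℂ) n l‖
      ≤ ∑ l : Fin N, (‖downShift N n l‖ + α * ‖cornerE N n l‖) := by
        apply Finset.sum_le_sum
        intro l _
        rw [downShiftAlpha_eq, Matrix.add_apply]
        refine le_trans (norm_add_le _ _) ?_
        rw [Matrix.smul_apply, norm_smul, Complex.norm_real, Real.norm_of_nonneg hα]
    _ = (∑ l : Fin N, ‖downShift N n l‖) + α * ∑ l : Fin N, ‖cornerE N n l‖ := by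
        rw [Finset.sum_add_distrib, Finset.mul_sum]
    _ ≤ 1 + α * 1 := by
        have := rowsum_cornerE n
        have := rowsum_downShift n
        have h2 : α * ∑ l : Fin N, ‖cornerE N n l‖ ≤ α * 1 :=
          mul_le_mul_of_nonneg_left (rowsum_cornerE n) hα
        linarith
    _ = 1 + α := by ring

lemma rowsum_downShiftAlpha_pow {α : ℝ} (hα : 0 ≤ α) (j : ℕ) (n : Fin N) :
    ∑ l : Fin N, ‖(downShiftAlpha N (α:ℂ) ^ j) n l‖ ≤ (1 + α) ^ j := by
  induction j generalizing n with
  | zero =>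
      have : ∀ l : Fin N, ‖(1 : Matrix (Fin N) (Fin N) ℂ) n l‖ = if n = l then (1:ℝ) else 0 := by
        intro l
        rw [Matrix.one_apply]
        split <;> simp
      rw [pow_zero, pow_zero]
      simp_rw [this]
      exact sum_ite_le (fun k k' hk hk' => hk ▸ hk' ▸ rfl) zero_le_one
  | succ j IH =>
      rw [pow_succ', pow_succ']
      exact rowsum_mul_le (by positivity) (rowsum_downShiftAlpha hα) IH n

lemma diff_support {α : ℂ} (j : ℕ) (n l : Fin N) (h : j ≤ (n:ℕ)) :
    (downShiftAlpha N α ^ j - downShift N ^ j) n l = 0 := by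
  induction j generalizing n l with
  | zero => simp
  | succ j IH =>
      have hdec : downShiftAlpha N α ^ (j+1) - downShift N ^ (j+1)
          = (α • cornerE N) * downShiftAlpha N α ^ j
            + downShift N * (downShiftAlpha N α ^ j - downShift N ^ j) := by
        rw [pow_succ', pow_succ', downShiftAlpha_eq, add_mul, mul_sub]
        abel
      rw [hdec]
      rw [Matrix.add_apply]
      have h1 : ((α • cornerE N) * downShiftAlpha N α ^ j) n l = 0 := by
        rw [Matrix.mul_apply]
        apply Finset.sum_eq_zero
        intro k _
        have : cornerE N n k = 0 := by
          simp only [cornerE, Matrix.of_apply, ite_eq_right_iff]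
          intro ⟨h0, _⟩
          omega
        rw [Matrix.smul_apply, this, smul_zero, zero_mul]
      have h2 : (downShift N * (downShiftAlpha N α ^ j - downShift N ^ j)) n l = 0 := by
        rw [Matrix.mul_apply]
        apply Finset.sum_eq_zero
        intro k _
        by_cases hk : (n:ℕ) = (k:ℕ) + 1
        · rw [IH k l (by omega), mul_zero]
        · have : downShift N n k = 0 := by
            simp only [downShift, Matrix.of_apply, ite_eq_right_iff]
            intro h0; exact absurd h0 hk
          rw [this, zero_mul]
      rw [h1, h2, add_zero]

lemma rowsum_diff {α : ℝ} (hα : 0 ≤ α) (j : ℕ) (n : Fin N) :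
    ∑ l : Fin N, ‖(downShiftAlpha N (α:ℂ) ^ j - downShift N ^ j) n l‖
      ≤ α * j * (1 + α) ^ j := by
  induction j generalizing n with
  | zero => simp
  | succ j IH =>
      have hdec : downShiftAlpha N (α:ℂ) ^ (j+1) - downShift N ^ (j+1)
          = ((α:ℂ) • cornerE N) * downShiftAlpha N (α:ℂ) ^ j
            + downShift N * (downShiftAlpha N (α:ℂ) ^ j - downShift N ^ j) := by
        rw [pow_succ', pow_succ', downShiftAlpha_eq, add_mul, mul_sub]
        abel
      have key : ∀ l, ‖(downShiftAlpha N (α:ℂ) ^ (j+1) - downShift N ^ (j+1)) n l‖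
          ≤ ‖(((α:ℂ) • cornerE N) * downShiftAlpha N (α:ℂ) ^ j) n l‖
            + ‖(downShift N * (downShiftAlpha N (α:ℂ) ^ j - downShift N ^ j)) n l‖ := by
        intro l
        rw [hdec, Matrix.add_apply]
        exact norm_add_le _ _
      calc ∑ l : Fin N, ‖(downShiftAlpha N (α:ℂ) ^ (j+1) - downShift N ^ (j+1)) n l‖
          ≤ ∑ l : Fin N, (‖(((α:ℂ) • cornerE N) * downShiftAlpha N (α:ℂ) ^ j) n l‖
            + ‖(downShift N * (downShiftAlpha N (α:ℂ) ^ j - downShift N ^ j)) n l‖) :=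
            Finset.sum_le_sum (fun l _ => key l)
        _ = (∑ l : Fin N, ‖(((α:ℂ) • cornerE N) * downShiftAlpha N (α:ℂ) ^ j) n l‖)
            + ∑ l : Fin N, ‖(downShift N * (downShiftAlpha N (α:ℂ) ^ j - downShift N ^ j)) n l‖ :=
            Finset.sum_add_distrib
        _ ≤ α * (1+α)^j + 1 * (α * j * (1+α)^j) := by
            have hb1 : ∀ k, ∑ l : Fin N, ‖((α:ℂ) • cornerE N) k l‖ ≤ α := by
              intro k
              have : ∀ l, ‖((α:ℂ) • cornerE N) k l‖ = α * ‖cornerE N k l‖ := by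
                intro l
                rw [Matrix.smul_apply, norm_smul, Complex.norm_real, Real.norm_of_nonneg hα]
              simp_rw [this]
              rw [← Finset.mul_sum]
              calc α * ∑ l : Fin N, ‖cornerE N k l‖ ≤ α * 1 :=
                    mul_le_mul_of_nonneg_left (rowsum_cornerE k) hα
                _ = α := mul_one α
            have hA := rowsum_mul_le (by positivity)
              hb1 (rowsum_downShiftAlpha_pow hα j) n
            have hB := rowsum_mul_le (by positivity)
              (fun k => rowsum_downShift k) (fun k => IH k) n
            rw [downShiftAlpha_eq] at hA hB ⊢
            linarith
        _ ≤ α * ((j:ℝ)+1) * (1+α)^(j+1) := by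
            have h1 : (1:ℝ) ≤ 1 + α := by linarith
            have h2 : (0:ℝ) ≤ (1+α)^j := by positivity
            have h3 : (1+α)^j ≤ (1+α)^(j+1) := by
              calc (1+α)^j = (1+α)^j * 1 := (mul_one _).symm
                _ ≤ (1+α)^j * (1+α) := by nlinarith
                _ = (1+α)^(j+1) := (pow_succ _ _).symm
            have hj : (0:ℝ) ≤ (j:ℝ) := Nat.cast_nonneg j
            push_cast
            nlinarith [mul_nonneg (mul_nonneg hα (by linarith : (0:ℝ) ≤ (j:ℝ)+1))
              (sub_nonneg.mpr h3)]
        _ = α * ((j:ℕ)+1 : ℕ) * (1 + α)^(j+1) := by push_cast; ring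

lemma downShift_pow_apply (j : ℕ) (n l : Fin N) :
    (downShift N ^ j) n l = if (n:ℕ) = (l:ℕ) + j then 1 else 0 := by
  induction j generalizing n l with
  | zero => rw [pow_zero, Matrix.one_apply]; simp [Fin.ext_iff]
  | succ j IH =>
      rw [pow_succ', Matrix.mul_apply]
      by_cases h : (n:ℕ) = (l:ℕ) + (j+1)
      · have hlt : (l:ℕ) + j < N := by omega
        rw [if_pos h, Finset.sum_eq_single_of_mem (⟨(l:ℕ)+j, hlt⟩ : Fin N) (Finset.mem_univ _)]
        · rw [IH]
          have h1 : downShift N n ⟨(l:ℕ)+j, hlt⟩ = 1 := by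
            simp only [downShift, Matrix.of_apply]
            rw [if_pos (by change (n:ℕ) = (l:ℕ) + j + 1; omega)]
          rw [h1, if_pos (by simp), one_mul]
        · intro k _ hk
          rw [IH]
          by_cases h2 : (k:ℕ) = (l:ℕ) + j
          · exact absurd (Fin.ext h2 : k = ⟨(l:ℕ)+j, hlt⟩) hk
          · rw [if_neg h2, mul_zero]
      · rw [if_neg h]
        apply Finset.sum_eq_zero
        intro k _
        rw [IH]
        by_cases h1 : (n:ℕ) = (k:ℕ) + 1
        · rw [if_neg (by omega), mul_zero]
        · have : downShift N n k = 0 := by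
            simp only [downShift, Matrix.of_apply]
            rw [if_neg h1]
          rw [this, zero_mul]

lemma poly_coeff_eq (r : ℕ) (co : ℕ → ℂ) (i : ℕ) :
    (∑ j ∈ range (r+1), Polynomial.C (co j) * Polynomial.X ^ j).coeff i
      = if i ≤ r then co i else 0 := by
  rw [Polynomial.finset_sum_coeff]
  have : ∀ j ∈ range (r+1), (Polynomial.C (co j) * Polynomial.X ^ j).coeff i
      = if j = i then co j else 0 := by
    intro j _
    rw [Polynomial.coeff_C_mul, Polynomial.coeff_X_pow]
    by_cases h : i = j
    · rw [if_pos h, if_pos h.symm, mul_one]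
    · rw [if_neg h, if_neg (fun hh => h hh.symm), mul_zero]
  rw [Finset.sum_congr rfl this, Finset.sum_ite_eq' (range (r+1)) i co]
  simp [Nat.lt_succ_iff]

lemma toeplitz_apply (r : ℕ) (co : ℕ → ℂ) (n l : Fin N) :
    (∑ j ∈ range (r+1), co j • downShift N ^ j) n l
      = if (l:ℕ) ≤ (n:ℕ)
          then (∑ j ∈ range (r+1), Polynomial.C (co j) * Polynomial.X ^ j).coeff ((n:ℕ)-(l:ℕ))
          else 0 := by
  rw [Matrix.sum_apply]
  simp_rw [Matrix.smul_apply, downShift_pow_apply, smul_eq_mul]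
  by_cases hln : (l:ℕ) ≤ (n:ℕ)
  · rw [if_pos hln, poly_coeff_eq]
    have : ∀ j ∈ range (r+1), co j * (if (n:ℕ) = (l:ℕ) + j then (1:ℂ) else 0)
        = if j = (n:ℕ)-(l:ℕ) then co j else 0 := by
      intro j _
      by_cases h : (n:ℕ) = (l:ℕ) + j
      · rw [if_pos h, if_pos (by omega), mul_one]
      · rw [if_neg h, if_neg (by omega), mul_zero]
    rw [Finset.sum_congr rfl this, Finset.sum_ite_eq' (range (r+1)) ((n:ℕ)-(l:ℕ)) co]
    simp [Nat.lt_succ_iff]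
  · rw [if_neg hln]
    apply Finset.sum_eq_zero
    intro j _
    rw [if_neg (by omega), mul_zero]

lemma toeplitz_inv (r : ℕ) (co : ℕ → ℂ) (h : PowerSeries ℂ)
    (hinv : ((∑ j ∈ range (r+1), Polynomial.C (co j) * Polynomial.X ^ j : ℂ[X]) :
        PowerSeries ℂ) * h = 1) :
    (∑ j ∈ range (r+1), co j • downShift N ^ j) *
      (Matrix.of fun n l : Fin N =>
        if (l:ℕ) ≤ (n:ℕ) then PowerSeries.coeff ((n:ℕ)-(l:ℕ)) h else 0) = 1 := by
  set q : ℂ[X] := ∑ j ∈ range (r+1), Polynomial.C (co j) * Polynomial.X ^ j with hq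
  ext n l
  rw [Matrix.mul_apply]
  simp_rw [toeplitz_apply r co, Matrix.of_apply]
  by_cases hln : (l:ℕ) ≤ (n:ℕ)
  · have key : ∀ k : Fin N,
        (if (k:ℕ) ≤ (n:ℕ) then q.coeff ((n:ℕ)-(k:ℕ)) else 0) *
          (if (l:ℕ) ≤ (k:ℕ) then PowerSeries.coeff ((k:ℕ)-(l:ℕ)) h else 0)
        = if k ∈ Finset.Icc l n then
            q.coeff ((n:ℕ)-(k:ℕ)) * PowerSeries.coeff ((k:ℕ)-(l:ℕ)) h else 0 := by
      intro k
      by_cases h1 : (k:ℕ) ≤ (n:ℕ) <;> by_cases h2 : (l:ℕ) ≤ (k:ℕ)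
      · rw [if_pos h1, if_pos h2,
          if_pos (Finset.mem_Icc.mpr ⟨by rw [Fin.le_def]; exact h2, by rw [Fin.le_def]; exact h1⟩)]
      · rw [if_pos h1, if_neg h2, mul_zero, if_neg]
        intro hh
        obtain ⟨hh1, hh2⟩ := Finset.mem_Icc.mp hh
        rw [Fin.le_def] at hh1
        exact h2 hh1
      · rw [if_neg h1, zero_mul, if_neg]
        intro hh
        obtain ⟨hh1, hh2⟩ := Finset.mem_Icc.mp hh
        rw [Fin.le_def] at hh2
        exact h1 hh2
      · rw [if_neg h1, zero_mul, if_neg]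
        intro hh
        obtain ⟨hh1, hh2⟩ := Finset.mem_Icc.mp hh
        rw [Fin.le_def] at hh2
        exact h1 hh2
    rw [Finset.sum_congr rfl (fun k _ => key k), ← Finset.sum_filter,
      Finset.filter_mem_eq_inter, Finset.univ_inter]
    have hbij : ∑ k ∈ Finset.Icc l n,
          q.coeff ((n:ℕ)-(k:ℕ)) * PowerSeries.coeff ((k:ℕ)-(l:ℕ)) h
        = ∑ d ∈ range ((n:ℕ)-(l:ℕ)+1), q.coeff d * PowerSeries.coeff ((n:ℕ)-(l:ℕ)-d) h := by
      refine Finset.sum_nbij' (fun k => (n:ℕ) - (k:ℕ))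
        (fun d => (⟨(n:ℕ) - d, Nat.lt_of_le_of_lt (Nat.sub_le _ _) n.isLt⟩ : Fin N))
        ?_ ?_ ?_ ?_ ?_
      · intro k hk
        obtain ⟨hk1, hk2⟩ := Finset.mem_Icc.mp hk
        rw [Fin.le_def] at hk1 hk2
        show (n:ℕ) - (k:ℕ) ∈ Finset.range ((n:ℕ)-(l:ℕ)+1)
        rw [Finset.mem_range]
        omega
      · intro d hd
        rw [Finset.mem_range] at hd
        rw [Finset.mem_Icc]
        constructor
        · rw [Fin.le_def]
          show (l:ℕ) ≤ (n:ℕ) - d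
          omega
        · rw [Fin.le_def]
          show (n:ℕ) - d ≤ (n:ℕ)
          omega
      · intro k hk
        obtain ⟨hk1, hk2⟩ := Finset.mem_Icc.mp hk
        rw [Fin.le_def] at hk1 hk2
        apply Fin.ext
        show (n:ℕ) - ((n:ℕ) - (k:ℕ)) = (k:ℕ)
        omega
      · intro d hd
        rw [Finset.mem_range] at hd
        show (n:ℕ) - ((n:ℕ) - d) = d
        omega
      · intro k hk
        obtain ⟨hk1, hk2⟩ := Finset.mem_Icc.mp hk
        rw [Fin.le_def] at hk1 hk2
        have e2 : (n:ℕ) - (l:ℕ) - ((n:ℕ) - (k:ℕ)) = (k:ℕ) - (l:ℕ) := by omega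
        rw [e2]
    rw [hbij, ← Finset.Nat.sum_antidiagonal_eq_sum_range_succ_mk
      (fun p => q.coeff p.1 * PowerSeries.coeff p.2 h)]
    have hc : ∑ p ∈ antidiagonal ((n:ℕ)-(l:ℕ)),
        q.coeff p.1 * PowerSeries.coeff p.2 h
        = PowerSeries.coeff ((n:ℕ)-(l:ℕ)) ((q : PowerSeries ℂ) * h) := by
      rw [PowerSeries.coeff_mul]
      apply Finset.sum_congr rfl
      intro p _
      rw [Polynomial.coeff_coe]
    rw [hc, hinv, PowerSeries.coeff_one, Matrix.one_apply]
    by_cases hnl : n = l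
    · rw [if_pos (by rw [hnl]; omega), if_pos hnl]
    · rw [if_neg (by rw [Fin.ext_iff] at hnl; omega), if_neg hnl]
  · rw [Matrix.one_apply, if_neg (by intro hh; exact hln (by rw [hh]))]
    apply Finset.sum_eq_zero
    intro k _
    by_cases h2 : (l:ℕ) ≤ (k:ℕ)
    · rw [if_neg (show ¬ (k:ℕ) ≤ (n:ℕ) by omega), zero_mul]
    · rw [if_neg h2, mul_zero]

lemma sum_ite_lt_le (r : ℕ) {c : ℝ} (hc : 0 ≤ c) :
    ∑ k : Fin N, (if (k:ℕ) < r then c else 0) ≤ r * c := by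
  rw [← Finset.sum_filter, Finset.sum_const]
  have hcard : (Finset.univ.filter (fun k : Fin N => (k:ℕ) < r)).card ≤ r := by
    have h3 : (Finset.univ.filter (fun k : Fin N => (k:ℕ) < r)).card
        ≤ (Finset.range r).card := by
      apply Finset.card_le_card_of_injOn (fun k : Fin N => (k:ℕ))
      · intro k hk
        exact Finset.mem_range.mpr (Finset.mem_filter.mp hk).2
      · intro k _ k' _ hh
        exact Fin.ext hh
    simpa [Finset.card_range] using h3
  calc (Finset.univ.filter (fun k : Fin N => (k:ℕ) < r)).card • c
      = ((Finset.univ.filter (fun k : Fin N => (k:ℕ) < r)).card : ℝ) * c := nsmul_eq_mul _ _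
    _ ≤ r * c := by
        apply mul_le_mul_of_nonneg_right _ hc
        exact_mod_cast hcard

lemma rowsum_mul_support_le {Gm D : Matrix (Fin N) (Fin N) ℂ} {G αB : ℝ} (r : ℕ)
    (hG0 : 0 ≤ G) (hαB : 0 ≤ αB)
    (hG : ∀ n l, ‖Gm n l‖ ≤ G)
    (hsupp : ∀ k l : Fin N, r ≤ (k:ℕ) → D k l = 0)
    (hrow : ∀ k, ∑ l : Fin N, ‖D k l‖ ≤ αB) :
    ∀ n, ∑ l : Fin N, ‖(Gm * D) n l‖ ≤ r * (G * αB) := by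
  intro n
  calc ∑ l : Fin N, ‖(Gm * D) n l‖
      ≤ ∑ l : Fin N, ∑ k : Fin N, ‖Gm n k‖ * ‖D k l‖ := by
        apply Finset.sum_le_sum
        intro l _
        rw [Matrix.mul_apply]
        refine le_trans (norm_sum_le _ _) ?_
        apply Finset.sum_le_sum
        intro k _
        rw [norm_mul]
    _ = ∑ k : Fin N, ‖Gm n k‖ * ∑ l : Fin N, ‖D k l‖ := by
        rw [Finset.sum_comm]
        simp_rw [Finset.mul_sum]
    _ ≤ ∑ k : Fin N, (if (k:ℕ) < r then G * αB else 0) := by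
        apply Finset.sum_le_sum
        intro k _
        by_cases hk : (k:ℕ) < r
        · rw [if_pos hk]
          exact mul_le_mul (hG n k) (hrow k) (Finset.sum_nonneg (fun l _ => norm_nonneg _)) hG0
        · rw [if_neg hk]
          have : ∀ l : Fin N, ‖D k l‖ = 0 := fun l => by
            rw [hsupp k l (by omega), norm_zero]
          simp_rw [this]
          simp
    _ ≤ r * (G * αB) := sum_ite_lt_le r (by positivity)

lemma mulVec_norm_le {M : Matrix (Fin N) (Fin N) ℂ} {B : ℝ} (hB : 0 ≤ B)
    (h : ∀ n, ∑ l : Fin N, ‖M n l‖ ≤ B) (v : Fin N → ℂ) :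
    ‖M.mulVec v‖ ≤ B * ‖v‖ := by
  rw [pi_norm_le_iff_of_nonneg (by positivity)]
  intro n
  rw [Matrix.mulVec]
  calc ‖M n ⬝ᵥ v‖ ≤ ∑ l : Fin N, ‖M n l‖ * ‖v l‖ := by
        rw [dotProduct]
        refine le_trans (norm_sum_le _ _) ?_
        apply Finset.sum_le_sum
        intro l _
        rw [norm_mul]
    _ ≤ ∑ l : Fin N, ‖M n l‖ * ‖v‖ := by
        apply Finset.sum_le_sum
        intro l _
        exact mul_le_mul_of_nonneg_left (norm_le_pi_norm v l) (norm_nonneg _)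
    _ = (∑ l : Fin N, ‖M n l‖) * ‖v‖ := by rw [Finset.sum_mul]
    _ ≤ B * ‖v‖ := mul_le_mul_of_nonneg_right (h n) (norm_nonneg _)



lemma poly_coeff_eq' (r : ℕ) (co : ℕ → ℂ) (i : ℕ) :
    (∑ j ∈ range (r+1), Polynomial.C (co j) * Polynomial.X ^ j).coeff i
      = if i ≤ r then co i else 0 := by
  rw [Polynomial.finset_sum_coeff]
  have : ∀ j ∈ range (r+1), (Polynomial.C (co j) * Polynomial.X ^ j).coeff i
      = if j = i then co j else 0 := by
    intro j _
    rw [Polynomial.coeff_C_mul, Polynomial.coeff_X_pow]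
    by_cases h : i = j
    · rw [if_pos h, if_pos h.symm, mul_one]
    · rw [if_neg h, if_neg (fun hh => h hh.symm), mul_zero]
  rw [Finset.sum_congr rfl this, Finset.sum_ite_eq' (range (r+1)) i co]
  simp [Nat.lt_succ_iff]

lemma root_transfer (r : ℕ) (hr : 1 ≤ r) (co : ℕ → ℂ) (hc0 : co 0 ≠ 0)
    (hroot : ∀ s : ℂ,
      (∑ j ∈ range (r+1), Polynomial.C (co j) * Polynomial.X ^ (r - j)).IsRoot s →
      (‖s‖ < 1 ∨ (‖s‖ = 1 ∧
        (∑ j ∈ range (r+1), Polynomial.C (co j) * Polynomial.X ^ (r - j)).rootMultiplicity s = 1))) :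
    ∀ x : ℂ, (∑ j ∈ range (r+1), Polynomial.C (co j) * Polynomial.X ^ j).IsRoot x →
      1 < ‖x‖ ∨ (‖x‖ = 1 ∧
        (∑ j ∈ range (r+1), Polynomial.C (co j) * Polynomial.X ^ j).rootMultiplicity x = 1) := by
  set q : ℂ[X] := ∑ j ∈ range (r+1), Polynomial.C (co j) * Polynomial.X ^ j with hqdef
  set p : ℂ[X] := ∑ j ∈ range (r+1), Polynomial.C (co j) * Polynomial.X ^ (r - j) with hpdef
  have hq0 : q ≠ 0 := by
    intro h0
    have := poly_coeff_eq' r co 0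
    rw [← hqdef, h0] at this
    simp at this
    exact hc0 this.symm
  have hpcr : p.coeff r = co 0 := by
    rw [hpdef, Polynomial.finset_sum_coeff]
    rw [Finset.sum_eq_single_of_mem 0 (Finset.mem_range.mpr (by omega))]
    · rw [Polynomial.coeff_C_mul, Polynomial.coeff_X_pow, Nat.sub_zero, if_pos rfl, mul_one]
    · intro j hj hj0
      rw [Finset.mem_range] at hj
      rw [Polynomial.coeff_C_mul, Polynomial.coeff_X_pow, if_neg (by omega), mul_zero]
  have hp0 : p ≠ 0 := fun h0 => hc0 (by rw [← hpcr, h0, Polynomial.coeff_zero])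
  have hqeval : ∀ y : ℂ, q.eval y = ∑ j ∈ range (r+1), co j * y ^ j := by
    intro y
    rw [hqdef, Polynomial.eval_finset_sum]
    apply Finset.sum_congr rfl
    intro j _
    rw [Polynomial.eval_mul, Polynomial.eval_C, Polynomial.eval_pow, Polynomial.eval_X]
  have hpeval : ∀ y : ℂ, p.eval y = ∑ j ∈ range (r+1), co j * y ^ (r - j) := by
    intro y
    rw [hpdef, Polynomial.eval_finset_sum]
    apply Finset.sum_congr rfl
    intro j _
    rw [Polynomial.eval_mul, Polynomial.eval_C, Polynomial.eval_pow, Polynomial.eval_X]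
  intro x hx
  have hx0 : x ≠ 0 := by
    intro h0
    have h1 : q.coeff 0 = co 0 := by rw [poly_coeff_eq' r co 0]; simp
    have h2 : q.eval 0 = 0 := h0 ▸ hx.eq_zero
    rw [← Polynomial.coeff_zero_eq_eval_zero, h1] at h2
    exact hc0 h2
  have hxr0 : x ^ r ≠ 0 := pow_ne_zero r hx0
  -- p(1/x) = 0
  have hkey : p.eval x⁻¹ * x ^ r = q.eval x := by
    rw [hpeval, hqeval, Finset.sum_mul]
    apply Finset.sum_congr rfl
    intro j hj
    rw [Finset.mem_range] at hj
    have hjr : j ≤ r := by omega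
    have : (x⁻¹) ^ (r - j) * x ^ r = x ^ j := by
      have hsplit : x ^ r = x ^ (r - j) * x ^ j := by
        rw [← pow_add]
        congr 1
        omega
      rw [hsplit, ← mul_assoc, ← mul_pow, inv_mul_cancel₀ hx0, one_pow, one_mul]
    rw [mul_assoc, this]
  have hpx : p.IsRoot x⁻¹ := by
    have h2 : p.eval x⁻¹ * x ^ r = 0 := by rw [hkey]; exact hx.eq_zero
    rcases mul_eq_zero.mp h2 with h | h
    · exact h
    · exact absurd h hxr0
  have habs : ‖x⁻¹‖ = ‖x‖⁻¹ := norm_inv x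
  have haxpos : 0 < ‖x‖ := norm_pos_iff.mpr hx0
  rcases hroot x⁻¹ hpx with hlt | ⟨hone, hmult⟩
  · left
    rw [habs] at hlt
    have := mul_lt_mul_of_pos_right hlt haxpos
    rw [inv_mul_cancel₀ (ne_of_gt haxpos), one_mul] at this
    exact this
  · right
    rw [habs, inv_eq_one] at hone
    refine ⟨hone, ?_⟩
    have hge : 1 ≤ rootMultiplicity x q := (Polynomial.rootMultiplicity_pos hq0).mpr hx
    by_contra hne
    have h2 : 2 ≤ rootMultiplicity x q := by omega
    -- q' vanishes at x
    have hdq : rootMultiplicity x (derivative q) = rootMultiplicity x q - 1 :=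
      Polynomial.derivative_rootMultiplicity_of_root hx
    have hdqpos : 0 < rootMultiplicity x (derivative q) := by omega
    have hdq0 : derivative q ≠ 0 := by
      intro h0
      rw [h0, Polynomial.rootMultiplicity_zero] at hdqpos
      omega
    have hdqroot : (derivative q).IsRoot x :=
      (Polynomial.rootMultiplicity_pos hdq0).mp hdqpos
    -- eval identities
    have E1 : ∑ j ∈ range (r+1), co j * x ^ j = 0 := by rw [← hqeval]; exact hx.eq_zero
    have hderq : derivative q = ∑ j ∈ range (r+1), Polynomial.C (co j * j) * Polynomial.X ^ (j-1) := by
      rw [hqdef, derivative_sum]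
      apply Finset.sum_congr rfl
      intro j _
      rw [Polynomial.derivative_C_mul_X_pow]
    have E2 : ∑ j ∈ range (r+1), co j * (j:ℂ) * x ^ (j-1) = 0 := by
      have := hdqroot.eq_zero
      rw [hderq, Polynomial.eval_finset_sum] at this
      rw [← this]
      apply Finset.sum_congr rfl
      intro j _
      rw [Polynomial.eval_mul, Polynomial.eval_C, Polynomial.eval_pow, Polynomial.eval_X]
    have E2' : ∑ j ∈ range (r+1), co j * (j:ℂ) * x ^ j = 0 := by
      have hcong : ∀ j ∈ range (r+1), co j * (j:ℂ) * x ^ j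
          = x * (co j * (j:ℂ) * x ^ (j-1)) := by
        intro j _
        cases j with
        | zero => simp
        | succ k =>
            rw [Nat.add_sub_cancel]
            push_cast
            ring
      rw [Finset.sum_congr rfl hcong, ← Finset.mul_sum, E2, mul_zero]
    have E3 : ∑ j ∈ range (r+1), co j * ((r:ℂ) - (j:ℂ)) * x ^ j = 0 := by
      have : ∑ j ∈ range (r+1), co j * ((r:ℂ) - (j:ℂ)) * x ^ j
          = (r:ℂ) * (∑ j ∈ range (r+1), co j * x ^ j)
            - ∑ j ∈ range (r+1), co j * (j:ℂ) * x ^ j := by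
        rw [Finset.mul_sum, ← Finset.sum_sub_distrib]
        apply Finset.sum_congr rfl
        intro j _
        ring
      rw [this, E1, E2', mul_zero, sub_zero]
    -- p' vanishes at x⁻¹
    have hderp : derivative p
        = ∑ j ∈ range (r+1), Polynomial.C (co j * ((r-j : ℕ):ℂ)) * Polynomial.X ^ (r-j-1) := by
      rw [hpdef, derivative_sum]
      apply Finset.sum_congr rfl
      intro j _
      rw [Polynomial.derivative_C_mul_X_pow]
    have E4 : (derivative p).eval x⁻¹ * x ^ (r-1) = 0 := by
      rw [hderp, Polynomial.eval_finset_sum, Finset.sum_mul]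
      have hcong : ∀ j ∈ range (r+1),
          (Polynomial.C (co j * ((r-j : ℕ):ℂ)) * Polynomial.X ^ (r-j-1)).eval x⁻¹ * x ^ (r-1)
          = co j * ((r:ℂ) - (j:ℂ)) * x ^ j := by
        intro j hj
        rw [Finset.mem_range] at hj
        rw [Polynomial.eval_mul, Polynomial.eval_C, Polynomial.eval_pow, Polynomial.eval_X]
        rcases Nat.lt_or_ge j r with hjr | hjr
        · have hc1 : ((r-j : ℕ):ℂ) = (r:ℂ) - (j:ℂ) := by
            rw [Nat.cast_sub (by omega)]
          have hc2 : (x⁻¹) ^ (r-j-1) * x ^ (r-1) = x ^ j := by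
            have hsplit : x ^ (r-1) = x ^ (r-j-1) * x ^ j := by
              rw [← pow_add]
              congr 1
              omega
            rw [hsplit, ← mul_assoc, ← mul_pow, inv_mul_cancel₀ hx0, one_pow, one_mul]
          rw [hc1, mul_assoc, hc2]
        · have hjr' : j = r := by omega
          subst hjr'
          simp
      rw [Finset.sum_congr rfl hcong]
      exact E3
    have hxr1 : x ^ (r-1) ≠ 0 := pow_ne_zero _ hx0
    have hdproot : (derivative p).IsRoot x⁻¹ := by
      rcases mul_eq_zero.mp E4 with h | h
      · exact h
      · exact absurd h hxr1
    -- contradiction with simplicity of p at x⁻¹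
    have hdp0 : derivative p ≠ 0 := by
      intro h0
      have := natDegree_eq_zero_of_derivative_eq_zero h0
      have hrle : r ≤ p.natDegree := Polynomial.le_natDegree_of_ne_zero (by rw [hpcr]; exact hc0)
      omega
    have hdppos : 0 < rootMultiplicity x⁻¹ (derivative p) :=
      (Polynomial.rootMultiplicity_pos hdp0).mpr hdproot
    have hdp : rootMultiplicity x⁻¹ (derivative p) = rootMultiplicity x⁻¹ p - 1 :=
      Polynomial.derivative_rootMultiplicity_of_root hpx
    omega


end ParaDiagAux

/-- Unified ParaDiag-II convergence for linear multistep methods: if the characteristic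
polynomial `p(s; zᵢ) = Σⱼ (aⱼ + zᵢbⱼ) s^{r-j}` satisfies the root condition at every
`zᵢ = Δt λᵢ`, then there is a constant `c ≥ 1`, depending only on the method
coefficients and the values `zᵢ` (not on `α`, `N_t` or the iteration index), such that
for every `α ∈ (0, 1/c)` the α-circulant approximation `P_α` is invertible and the
errors of the stationary iteration `P_α u^{k+1} = (P_α - 𝐀)u^k + b` contract by the
factor `cα/(1-cα)` in the weighted max-norm `‖(I ⊗ P)·‖_∞`, for all `k ≥ 1`. -/
theorem paraDiagII_multistep_unified (r m : ℕ) (hr : 1 ≤ r) (hm : 1 ≤ m)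
    (a b : ℕ → ℝ)
    (P : Matrix (Fin m) (Fin m) ℂ) (hP : IsUnit P)
    (lam : Fin m → ℂ) (A : Matrix (Fin m) (Fin m) ℂ)
    (hA : A = P⁻¹ * Matrix.diagonal lam * P)
    (Δt : ℝ) (hΔt : 0 < Δt)
    (hroot : ∀ i : Fin m,
      ((a 0 : ℂ) + (Δt : ℂ) * lam i * (b 0 : ℂ)) ≠ 0 ∧
      ∀ s : ℂ,
        (∑ j ∈ Finset.range (r + 1),
            Polynomial.C ((a j : ℂ) + (Δt : ℂ) * lam i * (b j : ℂ)) *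
              Polynomial.X ^ (r - j)).IsRoot s →
        (‖s‖ < 1 ∨
          (‖s‖ = 1 ∧
            (∑ j ∈ Finset.range (r + 1),
              Polynomial.C ((a j : ℂ) + (Δt : ℂ) * lam i * (b j : ℂ)) *
                Polynomial.X ^ (r - j)).rootMultiplicity s = 1))) :
    ∃ c : ℝ, 1 ≤ c ∧
      ∀ Nt : ℕ, 1 ≤ Nt → ∀ α : ℝ, 0 < α → α < 1 / c →
        let It : Matrix (Fin Nt) (Fin Nt) ℂ := 1
        let Im : Matrix (Fin m) (Fin m) ℂ := 1
        let AA := (∑ j ∈ Finset.range (r + 1), (a j : ℂ) • downShift Nt ^ j) ⊗ₖ Im +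
          (Δt : ℂ) • ((∑ j ∈ Finset.range (r + 1), (b j : ℂ) • downShift Nt ^ j) ⊗ₖ A)
        let Pα :=
          (∑ j ∈ Finset.range (r + 1), (a j : ℂ) • downShiftAlpha Nt (α : ℂ) ^ j) ⊗ₖ Im +
          (Δt : ℂ) •
            ((∑ j ∈ Finset.range (r + 1), (b j : ℂ) • downShiftAlpha Nt (α : ℂ) ^ j) ⊗ₖ A)
        IsUnit Pα ∧
          ∀ (u bvec : Fin Nt × Fin m → ℂ) (useq : ℕ → Fin Nt × Fin m → ℂ),
            AA.mulVec u = bvec →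
            (∀ k, Pα.mulVec (useq (k + 1)) = (Pα - AA).mulVec (useq k) + bvec) →
            ∀ k, 1 ≤ k → ‖(It ⊗ₖ P).mulVec (useq (k + 1) - u)‖ ≤
              (c * α / (1 - c * α)) * ‖(It ⊗ₖ P).mulVec (useq k - u)‖ := by
  classical
  -- power series inverses with bounded coefficients, one per eigenvalue
  have hexist : ∀ i : Fin m, ∃ (h : PowerSeries ℂ) (G : ℝ), 0 ≤ G ∧
      ((∑ j ∈ Finset.range (r+1),
          Polynomial.C ((a j : ℂ) + (Δt : ℂ) * lam i * (b j : ℂ)) * Polynomial.X ^ j : ℂ[X]) :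
        PowerSeries ℂ) * h = 1 ∧
      ∀ n, ‖PowerSeries.coeff n h‖ ≤ G := by
    intro i
    apply ParaDiagAux.bdd_inv_coeff
    · intro h0
      have h1 := ParaDiagAux.poly_coeff_eq' r
        (fun j => (a j : ℂ) + (Δt : ℂ) * lam i * (b j : ℂ)) 0
      rw [h0] at h1
      simp only [Polynomial.coeff_zero, Nat.zero_le, if_pos] at h1
      exact (hroot i).1 h1.symm
    · exact ParaDiagAux.root_transfer r hr
        (fun j => (a j : ℂ) + (Δt : ℂ) * lam i * (b j : ℂ)) (hroot i).1 (hroot i).2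
  choose hps G hG0 hmulinv hGbd using hexist
  -- the constant
  set Bc : Fin m → ℝ := fun i =>
    ∑ j ∈ Finset.range (r+1), ‖(a j : ℂ) + (Δt : ℂ) * lam i * (b j : ℂ)‖ * (j:ℝ) * 2^j
    with hBcdef
  have hBc0 : ∀ i, 0 ≤ Bc i := fun i => Finset.sum_nonneg (fun j _ => by positivity)
  set c : ℝ := 1 + ∑ i, G i * (r:ℝ) * Bc i with hcdef
  have hsum0 : 0 ≤ ∑ i, G i * (r:ℝ) * Bc i :=
    Finset.sum_nonneg (fun i _ => mul_nonneg (mul_nonneg (hG0 i) (by positivity)) (hBc0 i))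
  have hc1 : 1 ≤ c := by rw [hcdef]; linarith
  have hcpos : 0 < c := by linarith
  have hcle : ∀ i, G i * (r:ℝ) * Bc i ≤ c - 1 := by
    intro i
    rw [hcdef]
    have h5 : G i * (r:ℝ) * Bc i ≤ ∑ i', G i' * (r:ℝ) * Bc i' :=
      Finset.single_le_sum
        (fun i' _ => mul_nonneg (mul_nonneg (hG0 i') (by positivity)) (hBc0 i'))
        (Finset.mem_univ i)
    linarith
  refine ⟨c, hc1, ?_⟩
  intro Nt hNt α hα0 hαc
  intro It Im AA Pα
  have hIt : It = (1 : Matrix (Fin Nt) (Fin Nt) ℂ) := rfl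
  have hIm : Im = (1 : Matrix (Fin m) (Fin m) ℂ) := rfl
  -- basic facts about α
  have hcα : c * α < 1 := by
    have := (lt_div_iff₀ hcpos).mp hαc
    linarith
  have hα1 : α ≤ 1 := by
    have h2 : 1/c ≤ 1 := by rw [div_le_one hcpos]; exact hc1
    linarith
  have hcα0 : 0 ≤ c * α := mul_nonneg (by linarith) hα0.le
  -- matrices
  set S : Matrix (Fin Nt) (Fin Nt) ℂ := downShift Nt with hSdef
  set Sα : Matrix (Fin Nt) (Fin Nt) ℂ := downShiftAlpha Nt (α:ℂ) with hSαdef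
  set Sa : Matrix (Fin Nt) (Fin Nt) ℂ := ∑ j ∈ Finset.range (r+1), (a j : ℂ) • S ^ j with hSadef
  set Sb : Matrix (Fin Nt) (Fin Nt) ℂ := ∑ j ∈ Finset.range (r+1), (b j : ℂ) • S ^ j with hSbdef
  set Saα : Matrix (Fin Nt) (Fin Nt) ℂ :=
    ∑ j ∈ Finset.range (r+1), (a j : ℂ) • Sα ^ j with hSaαdef
  set Sbα : Matrix (Fin Nt) (Fin Nt) ℂ :=
    ∑ j ∈ Finset.range (r+1), (b j : ℂ) • Sα ^ j with hSbαdef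
  have hAAdef : AA = Sa ⊗ₖ Im + (Δt : ℂ) • (Sb ⊗ₖ A) := rfl
  have hPαdef : Pα = Saα ⊗ₖ Im + (Δt : ℂ) • (Sbα ⊗ₖ A) := rfl
  set co : Fin m → ℕ → ℂ := fun i j => (a j : ℂ) + (Δt : ℂ) * lam i * (b j : ℂ) with hcodef
  set Kmat : Fin m → Matrix (Fin Nt) (Fin Nt) ℂ :=
    fun i => ∑ j ∈ Finset.range (r+1), co i j • S ^ j with hKdef
  set Cmat : Fin m → Matrix (Fin Nt) (Fin Nt) ℂ :=
    fun i => ∑ j ∈ Finset.range (r+1), co i j • Sα ^ j with hCdef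
  set Dmat : Fin m → Matrix (Fin Nt) (Fin Nt) ℂ := fun i => Cmat i - Kmat i with hDdef
  set Ginv : Fin m → Matrix (Fin Nt) (Fin Nt) ℂ := fun i =>
    Matrix.of fun n l : Fin Nt =>
      if (l:ℕ) ≤ (n:ℕ) then PowerSeries.coeff ((n:ℕ)-(l:ℕ)) (hps i) else 0 with hGinvdef
  -- Toeplitz inverse identities
  have hKG : ∀ i, Kmat i * Ginv i = 1 := fun i =>
    ParaDiagAux.toeplitz_inv r (co i) (hps i) (hmulinv i)
  have hGK : ∀ i, Ginv i * Kmat i = 1 := fun i => mul_eq_one_comm.mp (hKG i)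
  -- combination identities
  have hKsum : ∀ i, Sa + ((Δt:ℂ) * lam i) • Sb = Kmat i := by
    intro i
    rw [hSadef, hSbdef, hKdef, Finset.smul_sum, ← Finset.sum_add_distrib]
    apply Finset.sum_congr rfl
    intro j _
    rw [smul_smul, ← add_smul]
  have hCsum : ∀ i, Saα + ((Δt:ℂ) * lam i) • Sbα = Cmat i := by
    intro i
    rw [hSaαdef, hSbαdef, hCdef, Finset.smul_sum, ← Finset.sum_add_distrib]
    apply Finset.sum_congr rfl
    intro j _
    rw [smul_smul, ← add_smul]
  -- D support and row sums
  have hDsum : ∀ i, Dmat i = ∑ j ∈ Finset.range (r+1), co i j • (Sα ^ j - S ^ j) := by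
    intro i
    rw [hDdef]
    show Cmat i - Kmat i = _
    rw [hCdef, hKdef, ← Finset.sum_sub_distrib]
    apply Finset.sum_congr rfl
    intro j _
    rw [smul_sub]
  have hDsupp : ∀ i (k l : Fin Nt), r ≤ (k:ℕ) → Dmat i k l = 0 := by
    intro i k l hk
    rw [hDsum, Matrix.sum_apply]
    apply Finset.sum_eq_zero
    intro j hj
    rw [Finset.mem_range] at hj
    rw [Matrix.smul_apply, hSαdef, hSdef,
      ParaDiagAux.diff_support j k l (by omega), smul_zero]
  have hDrow : ∀ i (k : Fin Nt), ∑ l : Fin Nt, ‖Dmat i k l‖ ≤ α * Bc i := by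
    intro i k
    calc ∑ l : Fin Nt, ‖Dmat i k l‖
        ≤ ∑ l : Fin Nt, ∑ j ∈ Finset.range (r+1), ‖co i j‖ * ‖(Sα ^ j - S ^ j) k l‖ := by
          apply Finset.sum_le_sum
          intro l _
          rw [hDsum, Matrix.sum_apply]
          refine le_trans (norm_sum_le _ _) ?_
          apply Finset.sum_le_sum
          intro j _
          rw [Matrix.smul_apply, norm_smul]
      _ = ∑ j ∈ Finset.range (r+1), ‖co i j‖ * ∑ l : Fin Nt, ‖(Sα ^ j - S ^ j) k l‖ := by
          rw [Finset.sum_comm]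
          simp_rw [Finset.mul_sum]
      _ ≤ ∑ j ∈ Finset.range (r+1), ‖co i j‖ * (α * (j:ℝ) * 2^j) := by
          apply Finset.sum_le_sum
          intro j _
          apply mul_le_mul_of_nonneg_left _ (norm_nonneg _)
          have hrd : ∑ l : Fin Nt, ‖(Sα ^ j - S ^ j) k l‖ ≤ α * (j:ℝ) * (1+α)^j := by
            rw [hSαdef, hSdef]
            exact ParaDiagAux.rowsum_diff hα0.le j k
          have h2 : (1 + α)^j ≤ 2^j := pow_le_pow_left₀ (by linarith) (by linarith) j
          have hj0 : (0:ℝ) ≤ α * (j:ℝ) := by positivity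
          calc ∑ l : Fin Nt, ‖(Sα ^ j - S ^ j) k l‖ ≤ α * (j:ℝ) * (1+α)^j := hrd
            _ = (α * (j:ℝ)) * (1+α)^j := by ring
            _ ≤ (α * (j:ℝ)) * 2^j := mul_le_mul_of_nonneg_left h2 hj0
            _ = α * (j:ℝ) * 2^j := by ring
      _ = α * Bc i := by
          have hBci : Bc i = ∑ j ∈ Finset.range (r+1), ‖co i j‖ * (j:ℝ) * 2^j := rfl
          rw [hBci, Finset.mul_sum]
          apply Finset.sum_congr rfl
          intro j _
          ring
  -- Ginv entries bounded
  have hGentry : ∀ i (n l : Fin Nt), ‖Ginv i n l‖ ≤ G i := by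
    intro i n l
    rw [hGinvdef]
    show ‖(Matrix.of fun n l : Fin Nt =>
      if (l:ℕ) ≤ (n:ℕ) then PowerSeries.coeff ((n:ℕ)-(l:ℕ)) (hps i) else 0) n l‖ ≤ G i
    rw [Matrix.of_apply]
    split
    · exact hGbd i _
    · rw [norm_zero]; exact hG0 i
  -- T = Ginv * D row sums
  have hTrow : ∀ i (n : Fin Nt), ∑ l : Fin Nt, ‖(Ginv i * Dmat i) n l‖ ≤ c * α := by
    intro i n
    have h1 := ParaDiagAux.rowsum_mul_support_le r (hG0 i)
      (mul_nonneg hα0.le (hBc0 i)) (hGentry i) (hDsupp i) (hDrow i) n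
    refine le_trans h1 ?_
    have h2 : (r:ℝ) * (G i * (α * Bc i)) = α * (G i * (r:ℝ) * Bc i) := by ring
    rw [h2]
    calc α * (G i * (r:ℝ) * Bc i) ≤ α * (c - 1) :=
          mul_le_mul_of_nonneg_left (hcle i) hα0.le
      _ ≤ α * c := by nlinarith
      _ = c * α := mul_comm _ _
  -- the core contraction estimate
  have hcontr : ∀ i (v w : Fin Nt → ℂ), Cmat i *ᵥ w = Dmat i *ᵥ v →
      ‖w‖ ≤ (c * α / (1 - c * α)) * ‖v‖ := by
    intro i v w hvw
    have hCK : Cmat i = Kmat i + Dmat i := by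
      show Cmat i = Kmat i + (Cmat i - Kmat i)
      abel
    have h1 : w + (Ginv i * Dmat i) *ᵥ w = (Ginv i * Dmat i) *ᵥ v := by
      have h0 := congrArg (fun x => Ginv i *ᵥ x) hvw
      simp only [Matrix.mulVec_mulVec] at h0
      rw [hCK, Matrix.mul_add, hGK i, Matrix.add_mulVec, Matrix.one_mulVec] at h0
      exact h0
    have hw : w = (Ginv i * Dmat i) *ᵥ v - (Ginv i * Dmat i) *ᵥ w := by
      rw [← h1]; abel
    have hn1 : ‖w‖ ≤ c * α * ‖v‖ + c * α * ‖w‖ := by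
      calc ‖w‖ = ‖(Ginv i * Dmat i) *ᵥ v - (Ginv i * Dmat i) *ᵥ w‖ := by rw [← hw]
        _ ≤ ‖(Ginv i * Dmat i) *ᵥ v‖ + ‖(Ginv i * Dmat i) *ᵥ w‖ := norm_sub_le _ _
        _ ≤ c * α * ‖v‖ + c * α * ‖w‖ := by
            have hbv := ParaDiagAux.mulVec_norm_le hcα0 (hTrow i) v
            have hbw := ParaDiagAux.mulVec_norm_le hcα0 (hTrow i) w
            linarith
    rw [div_mul_eq_mul_div, le_div_iff₀ (by linarith : (0:ℝ) < 1 - c * α)]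
    nlinarith [norm_nonneg w, norm_nonneg v]
  -- Cmat i has trivial kernel
  have hCker : ∀ i (w : Fin Nt → ℂ), Cmat i *ᵥ w = 0 → w = 0 := by
    intro i w hw
    have h1 : Cmat i *ᵥ w = Dmat i *ᵥ (0 : Fin Nt → ℂ) := by
      rw [hw, Matrix.mulVec_zero]
    have h2 := hcontr i 0 w h1
    rw [norm_zero, mul_zero] at h2
    exact norm_le_zero_iff.mp h2
  -- P diagonalization fact
  have hPdet : IsUnit P.det := (Matrix.isUnit_iff_isUnit_det P).mp hP
  have hPA : P * A = Matrix.diagonal lam * P := by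
    rw [hA, ← Matrix.mul_assoc, ← Matrix.mul_assoc, Matrix.mul_nonsing_inv P hPdet,
      Matrix.one_mul]
  -- the mixed-product identity
  have hbig : ∀ (M1 M2 : Matrix (Fin Nt) (Fin Nt) ℂ),
      (It ⊗ₖ P) * (M1 ⊗ₖ Im + (Δt:ℂ) • (M2 ⊗ₖ A))
        = M1 ⊗ₖ P + (Δt:ℂ) • (M2 ⊗ₖ (Matrix.diagonal lam * P)) := by
    intro M1 M2
    rw [hIt, hIm, Matrix.mul_add, Matrix.mul_smul, ← Matrix.mul_kronecker_mul,
      ← Matrix.mul_kronecker_mul, Matrix.one_mul, Matrix.mul_one, Matrix.one_mul, hPA]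
  -- componentwise decoupling
  have hQv : ∀ (v : Fin Nt × Fin m → ℂ) (l : Fin Nt) (i : Fin m),
      ((It ⊗ₖ P) *ᵥ v) (l,i) = ∑ i' : Fin m, P i i' * v (l,i') := by
    intro v l i
    rw [Matrix.mulVec, dotProduct, Fintype.sum_prod_type]
    rw [Finset.sum_eq_single_of_mem l (Finset.mem_univ _)]
    · apply Finset.sum_congr rfl
      intro i' _
      rw [Matrix.kroneckerMap_apply, hIt, Matrix.one_apply_eq, one_mul]
    · intro k _ hk
      apply Finset.sum_eq_zero
      intro i' _
      rw [Matrix.kroneckerMap_apply, hIt, Matrix.one_apply_ne (Ne.symm hk), zero_mul, zero_mul]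
  have hcomp : ∀ (M1 M2 : Matrix (Fin Nt) (Fin Nt) ℂ) (v : Fin Nt × Fin m → ℂ)
      (n : Fin Nt) (i : Fin m),
      ((M1 ⊗ₖ P + (Δt:ℂ) • (M2 ⊗ₖ (Matrix.diagonal lam * P))) *ᵥ v) (n,i)
        = ((M1 + ((Δt:ℂ) * lam i) • M2) *ᵥ (fun l => ((It ⊗ₖ P) *ᵥ v) (l,i))) n := by
    intro M1 M2 v n i
    rw [Matrix.mulVec, dotProduct, Fintype.sum_prod_type]
    rw [Matrix.mulVec, dotProduct]
    apply Finset.sum_congr rfl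
    intro l _
    rw [hQv v l i, Finset.mul_sum]
    apply Finset.sum_congr rfl
    intro i' _
    rw [Matrix.add_apply, Matrix.kroneckerMap_apply, Matrix.smul_apply,
      Matrix.kroneckerMap_apply, Matrix.diagonal_mul, Matrix.add_apply,
      Matrix.smul_apply]
    simp only [smul_eq_mul]
    ring
  -- invertibility of It ⊗ P
  have hQmul : (It ⊗ₖ P) * (It ⊗ₖ P⁻¹) = 1 := by
    rw [hIt, ← Matrix.mul_kronecker_mul, Matrix.one_mul,
      Matrix.mul_nonsing_inv P hPdet, Matrix.one_kronecker_one]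
  have hQdet : IsUnit (It ⊗ₖ P).det :=
    IsUnit.of_mul_eq_one (It ⊗ₖ P⁻¹).det
      (by rw [← Matrix.det_mul, hQmul, Matrix.det_one])
  have hQinj : ∀ v : Fin Nt × Fin m → ℂ, (It ⊗ₖ P) *ᵥ v = 0 → v = 0 := by
    intro v hv
    calc v = (1 : Matrix (Fin Nt × Fin m) (Fin Nt × Fin m) ℂ) *ᵥ v :=
          (Matrix.one_mulVec v).symm
      _ = ((It ⊗ₖ P)⁻¹ * (It ⊗ₖ P)) *ᵥ v := by rw [Matrix.nonsing_inv_mul _ hQdet]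
      _ = (It ⊗ₖ P)⁻¹ *ᵥ ((It ⊗ₖ P) *ᵥ v) := (Matrix.mulVec_mulVec v _ _).symm
      _ = 0 := by rw [hv, Matrix.mulVec_zero]
  -- Pα is invertible
  have hQPα : (It ⊗ₖ P) * Pα = Saα ⊗ₖ P + (Δt:ℂ) • (Sbα ⊗ₖ (Matrix.diagonal lam * P)) := by
    rw [hPαdef]; exact hbig Saα Sbα
  have hCbigker : ∀ v : Fin Nt × Fin m → ℂ,
      (Saα ⊗ₖ P + (Δt:ℂ) • (Sbα ⊗ₖ (Matrix.diagonal lam * P))) *ᵥ v = 0 → v = 0 := by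
    intro v hv
    have h1 : ∀ i, Cmat i *ᵥ (fun l => ((It ⊗ₖ P) *ᵥ v) (l,i)) = 0 := by
      intro i
      funext n
      have h2 := congrFun hv (n, i)
      rw [hcomp Saα Sbα v n i] at h2
      rw [hCsum i] at h2
      exact h2
    have h2 : (It ⊗ₖ P) *ᵥ v = 0 := by
      funext x
      obtain ⟨n, i⟩ := x
      exact congrFun (hCker i _ (h1 i)) n
    exact hQinj v h2
  have hCbigdet : (Saα ⊗ₖ P + (Δt:ℂ) • (Sbα ⊗ₖ (Matrix.diagonal lam * P))).det ≠ 0 := by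
    intro h0
    obtain ⟨v, hv0, hv⟩ := Matrix.exists_mulVec_eq_zero_iff.mpr h0
    exact hv0 (hCbigker v hv)
  have hPαunit : IsUnit Pα := by
    have h1 : IsUnit ((It ⊗ₖ P) * Pα) := by
      rw [hQPα, Matrix.isUnit_iff_isUnit_det]
      exact isUnit_iff_ne_zero.mpr hCbigdet
    rw [Matrix.isUnit_iff_isUnit_det, Matrix.det_mul] at h1
    exact (Matrix.isUnit_iff_isUnit_det Pα).mpr (IsUnit.mul_iff.mp h1).2
  refine ⟨hPαunit, ?_⟩
  -- the iteration estimate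
  intro u bvec useq hu hit k hk
  have herr : Pα *ᵥ (useq (k+1) - u) = (Pα - AA) *ᵥ (useq k - u) := by
    rw [Matrix.mulVec_sub, Matrix.mulVec_sub, hit k, Matrix.sub_mulVec, Matrix.sub_mulVec, hu]
    abel
  set W : ℕ → Fin Nt × Fin m → ℂ := fun k' => (It ⊗ₖ P) *ᵥ (useq k' - u) with hWdef
  have hWeq : ∀ i, Cmat i *ᵥ (fun l => W (k+1) (l,i)) = Dmat i *ᵥ (fun l => W k (l,i)) := by
    intro i
    funext n
    have h1 := congrFun (congrArg (fun x => (It ⊗ₖ P) *ᵥ x) herr) (n, i)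
    simp only [Matrix.mulVec_mulVec] at h1
    rw [Matrix.mul_sub] at h1
    rw [Matrix.sub_mulVec] at h1
    -- h1 : ((Q*Pα) *ᵥ err') (n,i) = ((Q*Pα) *ᵥ err) (n,i) - ((Q*AA) *ᵥ err) (n,i)
    have hQAA : (It ⊗ₖ P) * AA = Sa ⊗ₖ P + (Δt:ℂ) • (Sb ⊗ₖ (Matrix.diagonal lam * P)) := by
      rw [hAAdef]; exact hbig Sa Sb
    have e1 : ∀ w : Fin Nt × Fin m → ℂ, (((It ⊗ₖ P) * Pα) *ᵥ w) (n,i)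
        = (Cmat i *ᵥ (fun l => ((It ⊗ₖ P) *ᵥ w) (l,i))) n := by
      intro w
      rw [hQPα, hcomp Saα Sbα w n i, hCsum i]
    have e2 : ∀ w : Fin Nt × Fin m → ℂ, (((It ⊗ₖ P) * AA) *ᵥ w) (n,i)
        = (Kmat i *ᵥ (fun l => ((It ⊗ₖ P) *ᵥ w) (l,i))) n := by
      intro w
      rw [hQAA, hcomp Sa Sb w n i, hKsum i]
    have hsplit : ((It ⊗ₖ P) * (Pα - AA)) *ᵥ (useq k - u)
        = ((It ⊗ₖ P) * Pα) *ᵥ (useq k - u) - ((It ⊗ₖ P) * AA) *ᵥ (useq k - u) := by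
      rw [Matrix.mul_sub, Matrix.sub_mulVec]
    have h2 : (((It ⊗ₖ P) * Pα) *ᵥ (useq (k+1) - u)) (n,i)
        = (((It ⊗ₖ P) * Pα) *ᵥ (useq k - u)) (n,i)
          - (((It ⊗ₖ P) * AA) *ᵥ (useq k - u)) (n,i) := by
      rw [← Matrix.mulVec_mulVec, herr, Matrix.mulVec_mulVec, hsplit]
      rfl
    rw [e1, e1, e2] at h2
    have h3 : (Dmat i *ᵥ (fun l => W k (l,i))) n
        = (Cmat i *ᵥ (fun l => W k (l,i))) n - (Kmat i *ᵥ (fun l => W k (l,i))) n := by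
      rw [hDdef]
      show ((Cmat i - Kmat i) *ᵥ _) n = _
      rw [Matrix.sub_mulVec]
      rfl
    rw [h3]
    exact h2
  have hWle : ∀ i, ‖(fun l => W (k+1) (l,i))‖ ≤ (c * α / (1 - c * α)) * ‖(fun l => W k (l,i))‖ :=
    fun i => hcontr i _ _ (hWeq i)
  have hθ0 : 0 ≤ c * α / (1 - c * α) := div_nonneg hcα0 (by linarith)
  show ‖W (k+1)‖ ≤ (c * α / (1 - c * α)) * ‖W k‖
  rw [pi_norm_le_iff_of_nonneg (by positivity)]
  rintro ⟨n, i⟩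
  calc ‖W (k+1) (n,i)‖ = ‖(fun l => W (k+1) (l,i)) n‖ := rfl
    _ ≤ ‖(fun l => W (k+1) (l,i))‖ := norm_le_pi_norm (fun l => W (k+1) (l,i)) n
    _ ≤ (c * α / (1 - c * α)) * ‖(fun l => W k (l,i))‖ := hWle i
    _ ≤ (c * α / (1 - c * α)) * ‖W k‖ := by
        apply mul_le_mul_of_nonneg_left _ hθ0
        rw [pi_norm_le_iff_of_nonneg (norm_nonneg _)]
        intro l
        exact norm_le_pi_norm (W k) (l,i)
end
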